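/- arXiv:2505.02044 — 4 statements merged into one kernel-verified Lean document; each statement's English description precedes it below -/
import Mathlib

section
/- Let P be a nonsymmetric operad with multiplication π and δ_π(f) := −[π,f]_GV. The Frölicher–Nijenhuis bracket [f,g]_FN := [f,g]_π + (-1)^m ι_{δ_π f} g − (-1)^{(m+1)n} ι_{δ_π g} f satisfies δ_π[f,g]_FN = [δ_π f, δ_π g]_GV for all f ∈ P_m, g ∈ P_n. -/
/-- A nonsymmetric operad (in "arity minus one" indexing: `Q n` is the space of
operations of arity `n + 1`, i.e. the space `P_{n+1}` of the paper), given by a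
collection of `k`-modules with partial compositions
`∘ᵢ : P_{m+1} × P_{n+1} → P_{m+n+1}` (here `i : Fin (m+1)` is the 0-based
position), satisfying the sequential and parallel associativity axioms and
unit axioms.  The target degree is a free variable `p` constrained by
`m + n = p`, which avoids dependent-type casts in the axioms. -/
structure NSOperad (k : Type*) [Field k] (Q : ℕ → Type*)
    [∀ n, AddCommGroup (Q n)] [∀ n, Module k (Q n)] where
  comp : ∀ {m n p : ℕ}, m + n = p → Q m → Fin (m + 1) → Q n → Q p
  comp_add_left : ∀ {m n p : ℕ} (h : m + n = p) (f f' : Q m) (i : Fin (m + 1)) (g : Q n),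
    comp h (f + f') i g = comp h f i g + comp h f' i g
  comp_add_right : ∀ {m n p : ℕ} (h : m + n = p) (f : Q m) (i : Fin (m + 1)) (g g' : Q n),
    comp h f i (g + g') = comp h f i g + comp h f i g'
  comp_smul_left : ∀ {m n p : ℕ} (h : m + n = p) (a : k) (f : Q m) (i : Fin (m + 1)) (g : Q n),
    comp h (a • f) i g = a • comp h f i g
  comp_smul_right : ∀ {m n p : ℕ} (h : m + n = p) (a : k) (f : Q m) (i : Fin (m + 1)) (g : Q n),
    comp h f i (a • g) = a • comp h f i g
  one : Q 0
  comp_one : ∀ {m : ℕ} (f : Q m) (i : Fin (m + 1)), comp (Nat.add_zero m) f i one = f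
  one_comp : ∀ {m : ℕ} (f : Q m), comp (Nat.zero_add m) one 0 f = f
  assoc_seq : ∀ {m n l q r p : ℕ} (h0 : n + l = q) (h1 : m + q = p) (h2 : m + n = r)
    (h3 : r + l = p) (f : Q m) (g : Q n) (hh : Q l) (i : Fin (m + 1)) (j : Fin (n + 1)),
    comp h1 f i (comp h0 g j hh) =
      comp h3 (comp h2 f i g) ⟨(i : ℕ) + (j : ℕ), by have := i.isLt; have := j.isLt; omega⟩ hh
  assoc_par : ∀ {m n l r s p : ℕ} (h2 : m + n = r) (h3 : r + l = p) (h4 : m + l = s)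
    (h5 : s + n = p) (f : Q m) (g : Q n) (hh : Q l) (i j : Fin (m + 1)), (i : ℕ) < (j : ℕ) →
    comp h3 (comp h2 f i g) ⟨(j : ℕ) + n, by have := j.isLt; omega⟩ hh =
      comp h5 (comp h4 f j hh) ⟨(i : ℕ), by have := i.isLt; omega⟩ g

namespace NSOperad

variable {k : Type*} [Field k] {Q : ℕ → Type*}
  [∀ n, AddCommGroup (Q n)] [∀ n, Module k (Q n)]

/-- Transport along an equality of degrees. -/
def tr {i j : ℕ} (h : i = j) (x : Q i) : Q j := h ▸ x

variable (O : NSOperad k Q)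

/-- The contraction operator `ι_g f := Σᵢ (-1)^{(i-1)(n-1)} f ∘ᵢ g`
(for `f ∈ P_{m+1}`, `g ∈ P_{n+1}` in paper degrees). -/
def iota {m n : ℕ} (g : Q n) (f : Q m) : Q (m + n) :=
  ∑ i : Fin (m + 1), ((-1 : k) ^ ((i : ℕ) * n)) • O.comp rfl f i g

/-- `π ∈ P_2` is a multiplication if `π ∘₁ π = π ∘₂ π`. -/
def IsMult (π : Q 1) : Prop := O.comp rfl π 0 π = O.comp rfl π 1 π

/-- The Gerstenhaber–Voronov bracket `[f,g]_GV = ι_f g − (-1)^{mn} ι_g f`. -/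
def gv {m n : ℕ} (f : Q m) (g : Q n) : Q (m + n) :=
  tr (by omega : n + m = m + n) (O.iota f g) - ((-1 : k) ^ (m * n)) • O.iota g f

/-- The differential `δ_π f := −[π, f]_GV`. -/
def delta (π : Q 1) {n : ℕ} (f : Q n) : Q (n + 1) :=
  - tr (by omega : 1 + n = n + 1) (O.gv π f)

/-- The map `θ f := −ι_f π`. -/
def theta (π : Q 1) {n : ℕ} (f : Q n) : Q (n + 1) :=
  - tr (by omega : 1 + n = n + 1) (O.iota f π)

/-- The map `D f := −ι_π f`. -/
def Dop (π : Q 1) {n : ℕ} (f : Q n) : Q (n + 1) := - O.iota π f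

/-- The cup product `f ∪_π g := (π ∘₂ g) ∘₁ f`. -/
def cup (π : Q 1) {m n : ℕ} (f : Q m) (g : Q n) : Q (m + n + 1) :=
  O.comp (by omega : (1 + n) + m = m + n + 1) (O.comp rfl π 1 g) 0 f

/-- The cup bracket `[f,g]_π := f ∪_π g − (-1)^{(m+1)(n+1)} g ∪_π f`
(paper degrees `m+1`, `n+1`). -/
def cupBracket (π : Q 1) {m n : ℕ} (f : Q m) (g : Q n) : Q (m + n + 1) :=
  O.cup π f g - ((-1 : k) ^ ((m + 1) * (n + 1))) •
    tr (by omega : n + m + 1 = m + n + 1) (O.cup π g f)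

/-- The Frölicher–Nijenhuis bracket
`[f,g]_FN := [f,g]_π + (-1)^{m+1} ι_{δ_π f} g − (-1)^{(m+2)(n+1)} ι_{δ_π g} f`
(paper degrees `m+1`, `n+1`). -/
def fn (π : Q 1) {m n : ℕ} (f : Q m) (g : Q n) : Q (m + n + 1) :=
  O.cupBracket π f g
    + ((-1 : k) ^ (m + 1)) •
        tr (by omega : n + (m + 1) = m + n + 1) (O.iota (O.delta π f) g)
    - ((-1 : k) ^ ((m + 2) * (n + 1))) •
        tr (by omega : m + (n + 1) = m + n + 1) (O.iota (O.delta π g) f)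

/-- The derived bracket
`[f,g]_D := [f,g]_π + ι_{θ f} g − (-1)^{(m+1)(n+1)} ι_{θ g} f`. -/
def derived (π : Q 1) {m n : ℕ} (f : Q m) (g : Q n) : Q (m + n + 1) :=
  O.cupBracket π f g
    + tr (by omega : n + (m + 1) = m + n + 1) (O.iota (O.theta π f) g)
    - ((-1 : k) ^ ((m + 1) * (n + 1))) •
        tr (by omega : m + (n + 1) = m + n + 1) (O.iota (O.theta π g) f)

/-- The deformed element `π_S := π ∘₁ S + π ∘₂ S − S ∘₁ π` for `S ∈ P_1`. -/
def piDef (π : Q 1) (S : Q 0) : Q 1 :=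
  O.comp rfl π 0 S + O.comp rfl π 1 S - O.comp rfl S 0 π

/-- `S ∈ P_1` is a Nijenhuis element for the multiplication `π`:
`(π ∘₂ S) ∘₁ S = S ∘₁ (π ∘₁ S + π ∘₂ S − S ∘₁ π)`. -/
def IsNijenhuisFor (π : Q 1) (S : Q 0) : Prop :=
  O.comp rfl (O.comp rfl π 1 S) 0 S = O.comp rfl S 0 (O.piDef π S)

/-- Powers `N^j := N ∘₁ N^{j-1}`, `N^0 = 𝟙`. -/
def Npow (N : Q 0) : ℕ → Q 0
  | 0 => O.one
  | (j + 1) => O.comp (rfl : (0 : ℕ) + 0 = 0) N 0 (Npow N j)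

/-- `R ∈ P_1` is a Rota–Baxter element of weight `lam`:
`(π ∘₂ R) ∘₁ R = R ∘₁ (π ∘₁ R + π ∘₂ R + lam π)`. -/
def IsRB (π : Q 1) (lam : k) (R : Q 0) : Prop :=
  O.comp rfl (O.comp rfl π 1 R) 0 R =
    O.comp rfl R 0 (O.comp rfl π 0 R + O.comp rfl π 1 R + lam • π)

/-- `r ∈ P_1` is an averaging element:
`(π ∘₂ r) ∘₁ r = r ∘₁ (π ∘₁ r) = r ∘₁ (π ∘₂ r)`. -/
def IsAvg (π : Q 1) (r : Q 0) : Prop :=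
  O.comp rfl (O.comp rfl π 1 r) 0 r = O.comp rfl r 0 (O.comp rfl π 0 r) ∧
  O.comp rfl (O.comp rfl π 1 r) 0 r = O.comp rfl r 0 (O.comp rfl π 1 r)

end NSOperad

open NSOperad

section Infra

namespace NSOperad

set_option linter.unusedSectionVars false
variable {k : Type*} [Field k] {Q : ℕ → Type*}
  [∀ n, AddCommGroup (Q n)] [∀ n, Module k (Q n)] (O : NSOperad k Q)

@[simp] lemma tr_rfl {a : ℕ} (x : Q a) : tr rfl x = x := rfl

lemma tr_tr {a b c : ℕ} (h : a = b) (h' : b = c) (x : Q a) :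
    tr h' (tr h x) = tr (h.trans h') x := by subst h h'; rfl

lemma tr_add {a b : ℕ} (h : a = b) (x y : Q a) : tr h (x + y) = tr h x + tr h y := by
  subst h; rfl

lemma tr_sub {a b : ℕ} (h : a = b) (x y : Q a) : tr h (x - y) = tr h x - tr h y := by
  subst h; rfl

lemma tr_neg {a b : ℕ} (h : a = b) (x : Q a) : tr h (-x) = - tr h x := by
  subst h; rfl

lemma tr_smul {a b : ℕ} (h : a = b) (c : k) (x : Q a) : tr h (c • x) = c • tr h x := by
  subst h; rfl

lemma tr_sum {a b : ℕ} (h : a = b) {ι : Type*} (s : Finset ι) (x : ι → Q a) :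
    tr h (∑ i ∈ s, x i) = ∑ i ∈ s, tr h (x i) := by subst h; rfl

/-- Junk-extended composition, with flexible target degree. -/
def cc {m n p : ℕ} (f : Q m) (i : ℕ) (g : Q n) : Q p :=
  if h : m + n = p ∧ i < m + 1 then O.comp h.1 f ⟨i, h.2⟩ g else 0

lemma comp_eq_cc {m n p : ℕ} (h : m + n = p) (f : Q m) (i : Fin (m + 1)) (g : Q n) :
    O.comp h f i g = (O.cc f (i : ℕ) g : Q p) := by
  rw [cc, dif_pos ⟨h, i.isLt⟩]

lemma tr_cc {m n p p' : ℕ} (h : p = p') (f : Q m) (i : ℕ) (g : Q n) :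
    tr h (O.cc f i g : Q p) = (O.cc f i g : Q p') := by subst h; rfl

lemma cc_tr_left {m m' n p : ℕ} (h : m = m') (f : Q m) (i : ℕ) (g : Q n) :
    (O.cc (tr h f) i g : Q p) = O.cc f i g := by subst h; rfl

lemma cc_tr_right {m n n' p : ℕ} (h : n = n') (f : Q m) (i : ℕ) (g : Q n) :
    (O.cc f i (tr h g) : Q p) = O.cc f i g := by subst h; rfl

@[simp] lemma cc_zero_left {m n p : ℕ} (i : ℕ) (g : Q n) :
    (O.cc (0 : Q m) i g : Q p) = 0 := by
  rw [cc]; split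
  · rename_i hc
    have : (0 : Q m) = (0 : k) • (0 : Q m) := by simp
    rw [this, O.comp_smul_left, zero_smul]
  · rfl

@[simp] lemma cc_zero_right {m n p : ℕ} (f : Q m) (i : ℕ) :
    (O.cc f i (0 : Q n) : Q p) = 0 := by
  rw [cc]; split
  · rename_i hc
    have : (0 : Q n) = (0 : k) • (0 : Q n) := by simp
    rw [this, O.comp_smul_right, zero_smul]
  · rfl

lemma cc_add_left {m n p : ℕ} (f f' : Q m) (i : ℕ) (g : Q n) :
    (O.cc (f + f') i g : Q p) = O.cc f i g + O.cc f' i g := by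
  rw [cc, cc, cc]; split
  · apply O.comp_add_left
  · simp

lemma cc_add_right {m n p : ℕ} (f : Q m) (i : ℕ) (g g' : Q n) :
    (O.cc f i (g + g') : Q p) = O.cc f i g + O.cc f i g' := by
  rw [cc, cc, cc]; split
  · apply O.comp_add_right
  · simp

lemma cc_smul_left {m n p : ℕ} (a : k) (f : Q m) (i : ℕ) (g : Q n) :
    (O.cc (a • f) i g : Q p) = a • O.cc f i g := by
  rw [cc, cc]; split
  · apply O.comp_smul_left
  · simp

lemma cc_smul_right {m n p : ℕ} (a : k) (f : Q m) (i : ℕ) (g : Q n) :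
    (O.cc f i (a • g) : Q p) = a • O.cc f i g := by
  rw [cc, cc]; split
  · apply O.comp_smul_right
  · simp

lemma cc_sub_left {m n p : ℕ} (f f' : Q m) (i : ℕ) (g : Q n) :
    (O.cc (f - f') i g : Q p) = O.cc f i g - O.cc f' i g := by
  rw [sub_eq_add_neg, cc_add_left, sub_eq_add_neg, ← neg_one_smul k f', cc_smul_left,
    neg_one_smul]

lemma cc_sub_right {m n p : ℕ} (f : Q m) (i : ℕ) (g g' : Q n) :
    (O.cc f i (g - g') : Q p) = O.cc f i g - O.cc f i g' := by
  rw [sub_eq_add_neg, cc_add_right, sub_eq_add_neg, ← neg_one_smul k g', cc_smul_right,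
    neg_one_smul]

lemma cc_sum_left {m n p : ℕ} {ι : Type*} (s : Finset ι) (f : ι → Q m) (i : ℕ) (g : Q n) :
    (O.cc (∑ x ∈ s, f x) i g : Q p) = ∑ x ∈ s, O.cc (f x) i g := by
  classical
  induction s using Finset.cons_induction with
  | empty => simp
  | cons a s ha ih => rw [Finset.sum_cons, cc_add_left, ih, Finset.sum_cons]

lemma cc_sum_right {m n p : ℕ} {ι : Type*} (s : Finset ι) (f : Q m) (i : ℕ) (g : ι → Q n) :
    (O.cc f i (∑ x ∈ s, g x) : Q p) = ∑ x ∈ s, O.cc f i (g x) := by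
  classical
  induction s using Finset.cons_induction with
  | empty => simp
  | cons a s ha ih => rw [Finset.sum_cons, cc_add_right, ih, Finset.sum_cons]

/-- Sequential associativity in junk form. -/
lemma ccA {m n l q1 q2 p : ℕ} (hq1 : n + l = q1) (hq2 : m + n = q2)
    (f : Q m) (g : Q n) (h : Q l) (i j : ℕ) (hi : i ≤ m) (hj : j ≤ n) :
    (O.cc f i (O.cc g j h : Q q1) : Q p) = O.cc (O.cc f i g : Q q2) (i + j) h := by
  subst hq1 hq2
  by_cases hp : m + (n + l) = p
  · have e1 : (O.cc g j h : Q (n + l)) = O.comp rfl g ⟨j, by omega⟩ h := by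
      rw [cc, dif_pos ⟨rfl, by omega⟩]
    have e2 : (O.cc f i g : Q (m + n)) = O.comp rfl f ⟨i, by omega⟩ g := by
      rw [cc, dif_pos ⟨rfl, by omega⟩]
    have e3 : (O.cc f i (O.comp rfl g ⟨j, by omega⟩ h) : Q p) =
        O.comp hp f ⟨i, by omega⟩ (O.comp rfl g ⟨j, by omega⟩ h) := by
      rw [cc, dif_pos ⟨hp, by omega⟩]
    have e4 : (O.cc (O.comp rfl f ⟨i, by omega⟩ g) (i + j) h : Q p) =
        O.comp (by omega) (O.comp rfl f ⟨i, by omega⟩ g) ⟨i + j, by omega⟩ h := by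
      rw [cc, dif_pos ⟨by omega, by omega⟩]
    rw [e1, e2, e3, e4]
    exact O.assoc_seq rfl hp rfl (by omega) f g h ⟨i, by omega⟩ ⟨j, by omega⟩
  · have e1 : (O.cc f i (O.cc g j h : Q (n + l)) : Q p) = 0 := by
      rw [cc]; exact dif_neg (fun hc => hp (by omega))
    have e2 : (O.cc (O.cc f i g : Q (m + n)) (i + j) h : Q p) = 0 := by
      rw [cc]; exact dif_neg (fun hc => hp (by omega))
    rw [e1, e2]

/-- Parallel associativity in junk form. -/
lemma ccP {m n l q1 q2 p : ℕ} (hq1 : m + n = q1) (hq2 : m + l = q2)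
    (f : Q m) (g : Q n) (h : Q l) (i j : ℕ) (hij : i < j) (hj : j ≤ m) :
    (O.cc (O.cc f i g : Q q1) (j + n) h : Q p) = O.cc (O.cc f j h : Q q2) i g := by
  subst hq1 hq2
  by_cases hp : m + n + l = p
  · have e1 : (O.cc f i g : Q (m + n)) = O.comp rfl f ⟨i, by omega⟩ g := by
      rw [cc, dif_pos ⟨rfl, by omega⟩]
    have e2 : (O.cc f j h : Q (m + l)) = O.comp rfl f ⟨j, by omega⟩ h := by
      rw [cc, dif_pos ⟨rfl, by omega⟩]
    have e3 : (O.cc (O.comp rfl f ⟨i, by omega⟩ g) (j + n) h : Q p) =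
        O.comp hp (O.comp rfl f ⟨i, by omega⟩ g) ⟨j + n, by omega⟩ h := by
      rw [cc, dif_pos ⟨hp, by omega⟩]
    have e4 : (O.cc (O.comp rfl f ⟨j, by omega⟩ h) i g : Q p) =
        O.comp (by omega) (O.comp rfl f ⟨j, by omega⟩ h) ⟨i, by omega⟩ g := by
      rw [cc, dif_pos ⟨by omega, by omega⟩]
    rw [e1, e2, e3, e4]
    exact O.assoc_par rfl hp rfl (by omega) f g h ⟨i, by omega⟩ ⟨j, by omega⟩ hij
  · have e1 : (O.cc (O.cc f i g : Q (m + n)) (j + n) h : Q p) = 0 := by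
      rw [cc]; exact dif_neg (fun hc => hp (by omega))
    have e2 : (O.cc (O.cc f j h : Q (m + l)) i g : Q p) = 0 := by
      rw [cc]; exact dif_neg (fun hc => hp (by omega))
    rw [e1, e2]

end NSOperad

/-- parity helper for signs -/
lemma npow_eq {k : Type*} [Field k] {a b : ℕ} (h : a % 2 = b % 2) :
    ((-1 : k) ^ a) = (-1 : k) ^ b := by
  conv_lhs => rw [← Nat.div_add_mod a 2]
  conv_rhs => rw [← Nat.div_add_mod b 2]
  rw [pow_add, pow_add, pow_mul, pow_mul, neg_one_sq, one_pow, one_pow, h]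

lemma npow_mul2 {k : Type*} [Field k] {a : ℕ} : ((-1 : k) ^ (a * 2)) = 1 := by
  rw [mul_comm, pow_mul, neg_one_sq, one_pow]

/-- guarded-sum helpers -/
lemma sum_ite_lt {M : Type*} [AddCommMonoid M] {N i : ℕ} (hi : i ≤ N) (A : ℕ → M) :
    (∑ j ∈ Finset.range N, if j < i then A j else 0) = ∑ j ∈ Finset.range i, A j := by
  rw [← Finset.sum_subset (Finset.range_subset_range.2 hi)
      (fun x _ hx => if_neg (by simp at hx ⊢; omega))]
  exact Finset.sum_congr rfl fun x hx => if_pos (Finset.mem_range.1 hx)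

lemma sum_ite_ge {M : Type*} [AddCommMonoid M] {N i : ℕ} (A : ℕ → M) :
    (∑ j ∈ Finset.range (i + N), if i ≤ j then A j else 0) = ∑ r ∈ Finset.range N, A (i + r) := by
  rw [Finset.sum_range_add]
  rw [Finset.sum_congr rfl (fun x hx => if_neg (by simp at hx; omega)),
    Finset.sum_congr rfl (fun x _ => if_pos (by omega))]
  simp

end Infra

section Expr

namespace NSOperad

set_option linter.unusedSectionVars false

open Finset

variable {k : Type*} [Field k] {Q : ℕ → Type*}
  [∀ n, AddCommGroup (Q n)] [∀ n, Module k (Q n)] (O : NSOperad k Q) (π : Q 1)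

lemma iota_cc {m n p : ℕ} (h : m + n = p) (g : Q n) (f : Q m) :
    tr h (O.iota g f) =
      ∑ i ∈ range (m + 1), ((-1 : k) ^ (i * n)) • (O.cc f i g : Q p) := by
  rw [iota, tr_sum, ← Fin.sum_univ_eq_sum_range
    (fun i => ((-1 : k) ^ (i * n)) • (O.cc f i g : Q p))]
  exact Finset.sum_congr rfl fun i _ => by rw [tr_smul, O.comp_eq_cc, tr_cc]

lemma iota_cc' {m n : ℕ} (g : Q n) (f : Q m) :
    O.iota g f =
      ∑ i ∈ range (m + 1), ((-1 : k) ^ (i * n)) • (O.cc f i g : Q (m + n)) := by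
  have := O.iota_cc (rfl : m + n = m + n) g f
  simpa using this

lemma neg_one_sq_pow {m : ℕ} : ((-1 : k) ^ m) * (-1 : k) ^ m = 1 := by
  rw [← pow_add, npow_eq (b := 0) (by omega), pow_zero]

lemma delta_cc {m : ℕ} (f : Q m) :
    O.delta π f = ((-1 : k) ^ m) • (O.cc π 0 f : Q (m + 1)) + (O.cc π 1 f : Q (m + 1))
      - ∑ i ∈ range (m + 1), ((-1 : k) ^ i) • (O.cc f i π : Q (m + 1)) := by
  rw [delta, gv, tr_sub, tr_tr, tr_smul, O.iota_cc _ π f, O.iota_cc _ f π]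
  rw [Finset.sum_range_succ (fun i => ((-1 : k) ^ (i * m)) • (O.cc π i f : Q (m + 1))) 1,
    Finset.sum_range_one]
  simp only [zero_mul, pow_zero, one_smul, one_mul, mul_one]
  rw [smul_add, smul_smul, neg_one_sq_pow, one_smul, neg_sub]

lemma cup_cc {m n : ℕ} (f : Q m) (g : Q n) :
    O.cup π f g = (O.cc (O.cc π 1 g : Q (1 + n)) 0 f : Q (m + n + 1)) := by
  rw [cup, O.comp_eq_cc, O.comp_eq_cc]
  norm_num

end NSOperad

end Expr

section Fam

open Finset

variable {k : Type*} [Field k] {V : Type*} [AddCommGroup V] [Module k V]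

lemma sum_range_split {M : Type*} [AddCommMonoid M] {N a b : ℕ} (h : N = a + b) (A : ℕ → M) :
    ∑ j ∈ range N, A j = ∑ j ∈ range a, A j + ∑ j ∈ range b, A (a + j) := by
  subst h; exact Finset.sum_range_add A a b

lemma sum_shift1 {M : Type*} [AddCommMonoid M] (N : ℕ) (F : ℕ → M) :
    ∑ i ∈ range N, F (i + 1) = ∑ q ∈ range (N + 1), if 1 ≤ q then F q else 0 := by
  rw [Finset.sum_range_succ']
  simp

lemma sum_ite_ge' {M : Type*} [AddCommMonoid M] {L N i : ℕ} (h : L = i + N) (A : ℕ → M) :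
    (∑ j ∈ range L, if i ≤ j then A j else 0) = ∑ r ∈ range N, A (i + r) := by
  subst h; exact sum_ite_ge A

lemma sq_pow {a : ℕ} : ((-1 : k) ^ a) * ((-1 : k) ^ a) = 1 := by
  rw [← pow_add, npow_eq (b := 0) (by omega), pow_zero]

/-- the `P0`-family matching in the homotopy formula -/
lemma Hfam_P0 (m n : ℕ) (P : ℕ → V) :
    ((-1 : k) ^ n) • ∑ i ∈ range (m + 2), (((-1 : k) ^ (i * n)) * ((-1 : k) ^ m)) • P i
      - ((-1 : k) ^ (m * (n + 1))) • P (m + 1)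
    = ∑ i ∈ range (m + 1), (((-1 : k) ^ (m + n)) * ((-1 : k) ^ (i * n))) • P i := by
  rw [Finset.sum_range_succ, smul_add, Finset.smul_sum]
  rw [show ((m : ℕ) + 1) * n = m * n + n by ring]
  have hz : ((-1 : k) ^ n) • (((-1 : k) ^ (m * n + n)) * ((-1 : k) ^ m)) • P (m + 1)
      - ((-1 : k) ^ (m * (n + 1))) • P (m + 1) = 0 := by
    rw [smul_smul, ← sub_smul]
    convert zero_smul k (P (m + 1))
    linear_combination (((-1 : k) ^ (m * n)) * ((-1 : k) ^ m)) * (sq_pow (k := k) (a := n))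
  rw [add_sub_assoc, hz, add_zero]
  refine Finset.sum_congr rfl fun i _ => ?_
  rw [smul_smul]
  congr 1
  ring

/-- the `P1`-family matching in the homotopy formula -/
lemma Hfam_P1 (m n : ℕ) (P : ℕ → V) :
    ((-1 : k) ^ n) • ∑ i ∈ range (m + 2), ((-1 : k) ^ (i * n)) • P i
      - ((-1 : k) ^ n) • P 0
    = ∑ i ∈ range (m + 1), ((-1 : k) ^ (i * n)) • P (1 + i) := by
  rw [Finset.sum_range_succ', smul_add, Finset.smul_sum]
  simp only [zero_mul, pow_zero, one_smul]
  rw [add_sub_cancel_right]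
  refine Finset.sum_congr rfl fun i _ => ?_
  rw [smul_smul, add_comm 1 i]
  congr 1
  rw [show ((i : ℕ) + 1) * n = i * n + n by ring, pow_add]
  linear_combination ((-1 : k) ^ (i * n)) * (sq_pow (k := k) (a := n))

/-- the `D`-family matching in the homotopy formula -/
lemma Hfam_DD (m n : ℕ) (D : ℕ → ℕ → V) :
    - ∑ i ∈ range (m + 1), ∑ r ∈ range (n + 1),
        (((-1 : k) ^ (i * (n + 1))) * ((-1 : k) ^ r)) • D i r
    = - ∑ i ∈ range (m + 1), ∑ r ∈ range (n + 1),
        (((-1 : k) ^ (i * n)) * ((-1 : k) ^ (i + r))) • D i r := by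
  congr 1
  refine Finset.sum_congr rfl fun i _ => Finset.sum_congr rfl fun r _ => ?_
  congr 1
  rw [show (i : ℕ) * (n + 1) = i * n + i by ring]
  rw [pow_add, pow_add, mul_assoc]

/-- the `C`-family matching in the homotopy formula -/
lemma Hfam_CC (m n : ℕ) (C : ℕ → ℕ → V) :
    - ((-1 : k) ^ n) • (∑ i ∈ range (m + 2), ∑ p ∈ range (m + 1),
        (((-1 : k) ^ (i * n)) * ((-1 : k) ^ p)) • C p i)
      + ∑ i ∈ range (m + 1), (((-1 : k) ^ (i * (n + 1))) * ((-1 : k) ^ n)) • C i i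
      + ∑ i ∈ range (m + 1), ((-1 : k) ^ (i * (n + 1))) • C i (i + 1)
    = - ∑ i ∈ range (m + 1), ((-1 : k) ^ (i * n)) •
        ((∑ j ∈ range (m + 1), if j < i then ((-1 : k) ^ j) • C j (i + 1) else 0)
          + ∑ p ∈ range (m + 1), if i < p then ((-1 : k) ^ (p + n)) • C p i else 0) := by
  have hdiag : ∑ i ∈ range (m + 1), (((-1 : k) ^ (i * (n + 1))) * ((-1 : k) ^ n)) • C i i
      = ∑ q ∈ range (m + 2), ∑ j ∈ range (m + 1),
          (if j = q then (((-1 : k) ^ (j * (n + 1))) * ((-1 : k) ^ n)) • C j q else 0) := by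
    rw [Finset.sum_range_succ (fun q => ∑ j ∈ range (m + 1),
      (if j = q then (((-1 : k) ^ (j * (n + 1))) * ((-1 : k) ^ n)) • C j q else 0)) (m + 1)]
    rw [Finset.sum_eq_zero (fun j hj => if_neg (by simp at hj; omega)), add_zero]
    refine Finset.sum_congr rfl fun q hq => ?_
    simp only [Finset.mem_range] at hq
    rw [Finset.sum_eq_single q (fun j _ hne => if_neg hne)
      (fun h => absurd (Finset.mem_range.2 hq) h)]
    rw [if_pos rfl]
  have hsup : ∑ i ∈ range (m + 1), ((-1 : k) ^ (i * (n + 1))) • C i (i + 1)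
      = ∑ q ∈ range (m + 2), ∑ j ∈ range (m + 1),
          (if j + 1 = q then ((-1 : k) ^ (j * (n + 1))) • C j q else 0) := by
    have key : ∀ i ∈ range (m + 1),
        ((-1 : k) ^ (i * (n + 1))) • C i (i + 1)
          = ∑ j ∈ range (m + 1),
              (if j + 1 = i + 1 then ((-1 : k) ^ (j * (n + 1))) • C j (i + 1) else 0) := by
      intro i hi
      rw [Finset.sum_eq_single i (fun j _ hne => if_neg (by omega)) (fun h => absurd hi h)]
      rw [if_pos rfl]
    rw [Finset.sum_congr rfl key, sum_shift1 (m + 1)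
      (fun q => ∑ j ∈ range (m + 1), (if j + 1 = q then ((-1 : k) ^ (j * (n + 1))) • C j q else 0))]
    refine Finset.sum_congr rfl fun q _ => ?_
    by_cases hq : 1 ≤ q
    · rw [if_pos hq]
    · rw [if_neg hq]
      exact (Finset.sum_eq_zero fun j _ => if_neg (by omega)).symm
  have hA : ∀ i ∈ range (m + 1), ((-1 : k) ^ (i * n)) •
        (∑ j ∈ range (m + 1), if j < i then ((-1 : k) ^ j) • C j (i + 1) else 0)
      = ∑ j ∈ range (m + 1), (if j + 1 < i + 1 then
          (((-1 : k) ^ n) * (((-1 : k) ^ ((i + 1) * n)) * ((-1 : k) ^ j))) • C j (i + 1) else 0) := by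
    intro i _
    rw [Finset.smul_sum]
    refine Finset.sum_congr rfl fun j _ => ?_
    by_cases hj : j < i
    · rw [if_pos hj, if_pos (by omega), smul_smul]
      congr 1
      rw [show ((i : ℕ) + 1) * n = i * n + n by ring, pow_add]
      linear_combination (-(((-1 : k) ^ (i * n)) * ((-1 : k) ^ j))) * (sq_pow (k := k) (a := n))
    · rw [if_neg hj, if_neg (by omega), smul_zero]
  have hAshift : ∑ i ∈ range (m + 1), ((-1 : k) ^ (i * n)) •
        (∑ j ∈ range (m + 1), if j < i then ((-1 : k) ^ j) • C j (i + 1) else 0)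
      = ∑ q ∈ range (m + 2), ∑ j ∈ range (m + 1), (if j + 1 < q then
          (((-1 : k) ^ n) * (((-1 : k) ^ (q * n)) * ((-1 : k) ^ j))) • C j q else 0) := by
    rw [Finset.sum_congr rfl hA, sum_shift1 (m + 1) (fun q => ∑ j ∈ range (m + 1),
      (if j + 1 < q then (((-1 : k) ^ n) * (((-1 : k) ^ (q * n)) * ((-1 : k) ^ j))) • C j q else 0))]
    refine Finset.sum_congr rfl fun q _ => ?_
    by_cases hq : 1 ≤ q
    · rw [if_pos hq]
    · rw [if_neg hq]
      exact (Finset.sum_eq_zero fun j _ => if_neg (by omega)).symm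
  have hCext : ∑ i ∈ range (m + 1), ((-1 : k) ^ (i * n)) •
        (∑ p ∈ range (m + 1), if i < p then ((-1 : k) ^ (p + n)) • C p i else 0)
      = ∑ q ∈ range (m + 2), ∑ j ∈ range (m + 1), (if q < j then
          (((-1 : k) ^ (q * n)) * ((-1 : k) ^ (j + n))) • C j q else 0) := by
    rw [Finset.sum_range_succ (fun q => ∑ j ∈ range (m + 1), (if q < j then
          (((-1 : k) ^ (q * n)) * ((-1 : k) ^ (j + n))) • C j q else 0)) (m + 1)]
    rw [Finset.sum_eq_zero (fun j hj => if_neg (by simp at hj; omega)), add_zero]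
    refine Finset.sum_congr rfl fun i _ => ?_
    rw [Finset.smul_sum]
    refine Finset.sum_congr rfl fun p _ => ?_
    by_cases hp : i < p
    · rw [if_pos hp, if_pos hp, smul_smul]
    · rw [if_neg hp, if_neg hp, smul_zero]
  rw [hdiag, hsup]
  have hrhs : ∀ i ∈ range (m + 1), ((-1 : k) ^ (i * n)) •
        ((∑ j ∈ range (m + 1), if j < i then ((-1 : k) ^ j) • C j (i + 1) else 0)
          + ∑ p ∈ range (m + 1), if i < p then ((-1 : k) ^ (p + n)) • C p i else 0)
      = ((-1 : k) ^ (i * n)) •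
          (∑ j ∈ range (m + 1), if j < i then ((-1 : k) ^ j) • C j (i + 1) else 0)
        + ((-1 : k) ^ (i * n)) •
          (∑ p ∈ range (m + 1), if i < p then ((-1 : k) ^ (p + n)) • C p i else 0) :=
    fun i _ => smul_add _ _ _
  rw [Finset.sum_congr rfl hrhs, Finset.sum_add_distrib, hAshift, hCext, Finset.smul_sum]
  rw [← Finset.sum_add_distrib, ← Finset.sum_add_distrib]
  rw [neg_add, ← Finset.sum_neg_distrib, ← Finset.sum_neg_distrib, ← Finset.sum_add_distrib]
  refine Finset.sum_congr rfl fun q hq => ?_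
  rw [Finset.smul_sum, ← Finset.sum_neg_distrib, ← Finset.sum_neg_distrib,
    ← Finset.sum_add_distrib, ← Finset.sum_add_distrib, ← Finset.sum_add_distrib]
  refine Finset.sum_congr rfl fun j hj => ?_
  by_cases h1 : j = q
  · subst h1
    rw [if_pos rfl, if_neg (by omega), if_neg (by omega), if_neg (by omega)]
    match_scalars
    rw [show (j : ℕ) * (n + 1) = j * n + j by ring, pow_add]
    ring
  · by_cases h2 : j + 1 = q
    · rw [if_neg h1, if_pos h2, if_neg (by omega), if_neg (by omega)]
      subst h2
      match_scalars
      rw [show ((j : ℕ) + 1) * n = j * n + n by ring,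
        show (j : ℕ) * (n + 1) = j * n + j by ring, pow_add, pow_add]
      linear_combination (-(((-1 : k) ^ (j * n)) * ((-1 : k) ^ j))) * (sq_pow (k := k) (a := n))
    · by_cases h3 : j + 1 < q
      · rw [if_neg h1, if_neg h2, if_pos h3, if_neg (by omega)]
        match_scalars
        ring
      · by_cases h4 : q < j
        · rw [if_neg h1, if_neg h2, if_neg h3, if_pos h4]
          match_scalars
          rw [pow_add]
          ring
        · omega

end Fam

section InnerSplit

namespace NSOperad

set_option linter.unusedSectionVars false

open Finset

variable {k : Type*} [Field k] {Q : ℕ → Type*}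
  [∀ n, AddCommGroup (Q n)] [∀ n, Module k (Q n)] (O : NSOperad k Q) (π : Q 1)

lemma inner_split {m n : ℕ} (f : Q m) (g : Q n) {i : ℕ} (hi : i ≤ m) :
    (∑ j ∈ range (m + n + 1),
        ((-1 : k) ^ j) • (O.cc (O.cc f i g : Q (m + n)) j π : Q (m + n + 1)))
    = (∑ j ∈ range (m + 1), if j < i then
          ((-1 : k) ^ j) • (O.cc (O.cc f j π : Q (m + 1)) (i + 1) g : Q (m + n + 1)) else 0)
      + (∑ r ∈ range (n + 1),
          ((-1 : k) ^ (i + r)) • (O.cc f i (O.cc g r π : Q (n + 1)) : Q (m + n + 1)))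
      + (∑ p ∈ range (m + 1), if i < p then
          ((-1 : k) ^ (p + n)) • (O.cc (O.cc f p π : Q (m + 1)) i g : Q (m + n + 1)) else 0) := by
  have step1 : ∀ j ∈ range (m + n + 1),
      ((-1 : k) ^ j) • (O.cc (O.cc f i g : Q (m + n)) j π : Q (m + n + 1))
      = (if j < i then
            ((-1 : k) ^ j) • (O.cc (O.cc f j π : Q (m + 1)) (i + 1) g : Q (m + n + 1)) else 0)
        + (if j < i + n + 1 then (if i ≤ j then
            ((-1 : k) ^ j) • (O.cc f i (O.cc g (j - i) π : Q (n + 1)) : Q (m + n + 1)) else 0) else 0)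
        + (if i + n + 1 ≤ j then
            ((-1 : k) ^ j) • (O.cc (O.cc f (j - n) π : Q (m + 1)) i g : Q (m + n + 1)) else 0) := by
    intro j hj
    rw [Finset.mem_range] at hj
    by_cases h1 : j < i
    · rw [if_pos h1, if_pos (by omega), if_neg (by omega), if_neg (by omega)]
      rw [add_zero, add_zero]
      rw [(O.ccP rfl rfl f π g j i h1 hi).symm]
    · by_cases h2 : j < i + n + 1
      · rw [if_neg h1, if_pos h2, if_pos (by omega), if_neg (by omega)]
        rw [zero_add, add_zero]
        obtain ⟨r, rfl⟩ : ∃ r, j = i + r := ⟨j - i, by omega⟩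
        rw [Nat.add_sub_cancel_left]
        rw [O.ccA rfl rfl f g π i r hi (by omega)]
      · rw [if_neg h1, if_neg h2, if_pos (by omega), zero_add, zero_add]
        obtain ⟨p, rfl⟩ : ∃ p, j = p + n := ⟨j - n, by omega⟩
        rw [Nat.add_sub_cancel]
        rw [O.ccP rfl rfl f g π i p (by omega) (by omega)]
  rw [Finset.sum_congr rfl step1, Finset.sum_add_distrib, Finset.sum_add_distrib]
  congr 1
  · congr 1
    -- first piece
    · rw [sum_ite_lt (by omega) (fun j =>
          ((-1 : k) ^ j) • (O.cc (O.cc f j π : Q (m + 1)) (i + 1) g : Q (m + n + 1)))]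
      rw [sum_ite_lt (by omega) (fun j =>
          ((-1 : k) ^ j) • (O.cc (O.cc f j π : Q (m + 1)) (i + 1) g : Q (m + n + 1)))]
    -- middle piece
    · rw [sum_ite_lt (by omega) (fun j => if i ≤ j then
          ((-1 : k) ^ j) • (O.cc f i (O.cc g (j - i) π : Q (n + 1)) : Q (m + n + 1)) else 0)]
      rw [show i + n + 1 = i + (n + 1) by omega] at *
      rw [sum_ite_ge' rfl (fun j =>
          ((-1 : k) ^ j) • (O.cc f i (O.cc g (j - i) π : Q (n + 1)) : Q (m + n + 1)))]
      refine Finset.sum_congr rfl fun r _ => ?_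
      rw [Nat.add_sub_cancel_left]
  -- last piece
  · rw [sum_range_split (show m + n + 1 = n + (m + 1) by omega) (fun j => if i + n + 1 ≤ j then
        ((-1 : k) ^ j) • (O.cc (O.cc f (j - n) π : Q (m + 1)) i g : Q (m + n + 1)) else 0)]
    rw [Finset.sum_eq_zero (fun j hj => if_neg (by rw [Finset.mem_range] at hj; omega)), zero_add]
    refine Finset.sum_congr rfl fun p _ => ?_
    by_cases hp : i < p
    · rw [if_pos (by omega), if_pos hp]
      rw [show n + p - n = p by omega, show n + p = p + n by omega]
    · rw [if_neg (by omega), if_neg hp]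

end NSOperad

end InnerSplit

section Homotopy

namespace NSOperad

set_option linter.unusedSectionVars false
set_option maxHeartbeats 1000000

open Finset

variable {k : Type*} [Field k] {Q : ℕ → Type*}
  [∀ n, AddCommGroup (Q n)] [∀ n, Module k (Q n)] (O : NSOperad k Q) (π : Q 1)

lemma expandL {m n : ℕ} (f : Q m) (g : Q n) :
    O.delta π (O.iota g f)
    = (∑ i ∈ range (m + 1), (((-1 : k) ^ (m + n)) * ((-1 : k) ^ (i * n))) •
          (O.cc (O.cc π 0 f : Q (m + 1)) i g : Q (m + n + 1)))
      + (∑ i ∈ range (m + 1), ((-1 : k) ^ (i * n)) •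
          (O.cc (O.cc π 1 f : Q (m + 1)) (1 + i) g : Q (m + n + 1)))
      - ∑ i ∈ range (m + 1), ((-1 : k) ^ (i * n)) •
          ((∑ j ∈ range (m + 1), if j < i then
              ((-1 : k) ^ j) • (O.cc (O.cc f j π : Q (m + 1)) (i + 1) g : Q (m + n + 1)) else 0)
            + (∑ r ∈ range (n + 1),
              ((-1 : k) ^ (i + r)) • (O.cc f i (O.cc g r π : Q (n + 1)) : Q (m + n + 1)))
            + (∑ p ∈ range (m + 1), if i < p then
              ((-1 : k) ^ (p + n)) • (O.cc (O.cc f p π : Q (m + 1)) i g : Q (m + n + 1)) else 0)) := by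
  rw [O.delta_cc π (O.iota g f)]
  have hA : (O.cc π 0 (O.iota g f) : Q (m + n + 1))
      = ∑ i ∈ range (m + 1), ((-1 : k) ^ (i * n)) •
          (O.cc (O.cc π 0 f : Q (m + 1)) i g : Q (m + n + 1)) := by
    rw [O.iota_cc', O.cc_sum_right]
    refine Finset.sum_congr rfl fun i hi => ?_
    rw [Finset.mem_range] at hi
    rw [O.cc_smul_right]
    congr 1
    rw [O.ccA rfl (by omega : 1 + m = m + 1) π f g 0 i (by omega) (by omega), zero_add]
  have hB : (O.cc π 1 (O.iota g f) : Q (m + n + 1))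
      = ∑ i ∈ range (m + 1), ((-1 : k) ^ (i * n)) •
          (O.cc (O.cc π 1 f : Q (m + 1)) (1 + i) g : Q (m + n + 1)) := by
    rw [O.iota_cc', O.cc_sum_right]
    refine Finset.sum_congr rfl fun i hi => ?_
    rw [Finset.mem_range] at hi
    rw [O.cc_smul_right]
    congr 1
    rw [O.ccA rfl (by omega : 1 + m = m + 1) π f g 1 i (by omega) (by omega)]
  have hC : (∑ j ∈ range (m + n + 1),
        ((-1 : k) ^ j) • (O.cc (O.iota g f) j π : Q (m + n + 1)))
      = ∑ i ∈ range (m + 1), ((-1 : k) ^ (i * n)) •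
          (∑ j ∈ range (m + n + 1),
            ((-1 : k) ^ j) • (O.cc (O.cc f i g : Q (m + n)) j π : Q (m + n + 1))) := by
    have h1 : ∀ j ∈ range (m + n + 1),
        ((-1 : k) ^ j) • (O.cc (O.iota g f) j π : Q (m + n + 1))
        = ∑ i ∈ range (m + 1), ((-1 : k) ^ (i * n)) •
            (((-1 : k) ^ j) • (O.cc (O.cc f i g : Q (m + n)) j π : Q (m + n + 1))) := by
      intro j _
      rw [O.iota_cc', O.cc_sum_left, Finset.smul_sum]
      refine Finset.sum_congr rfl fun i _ => ?_
      rw [O.cc_smul_left, smul_smul, smul_smul, mul_comm]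
    rw [Finset.sum_congr rfl h1, Finset.sum_comm]
    refine Finset.sum_congr rfl fun i _ => ?_
    rw [Finset.smul_sum]
  rw [hA, hB, hC, Finset.smul_sum]
  have hsplit : ∀ i ∈ range (m + 1), ((-1 : k) ^ (i * n)) •
        (∑ j ∈ range (m + n + 1),
          ((-1 : k) ^ j) • (O.cc (O.cc f i g : Q (m + n)) j π : Q (m + n + 1)))
      = ((-1 : k) ^ (i * n)) •
          ((∑ j ∈ range (m + 1), if j < i then
              ((-1 : k) ^ j) • (O.cc (O.cc f j π : Q (m + 1)) (i + 1) g : Q (m + n + 1)) else 0)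
            + (∑ r ∈ range (n + 1),
              ((-1 : k) ^ (i + r)) • (O.cc f i (O.cc g r π : Q (n + 1)) : Q (m + n + 1)))
            + (∑ p ∈ range (m + 1), if i < p then
              ((-1 : k) ^ (p + n)) • (O.cc (O.cc f p π : Q (m + 1)) i g : Q (m + n + 1)) else 0)) := by
    intro i hi
    rw [Finset.mem_range] at hi
    rw [O.inner_split π f g (by omega)]
  rw [Finset.sum_congr rfl hsplit]
  congr 1
  congr 1
  refine Finset.sum_congr rfl fun i _ => ?_
  rw [smul_smul]


lemma expandR1 {m n : ℕ} (f : Q m) (g : Q n) (h1 : m + 1 + n = m + n + 1) :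
    tr h1 (O.iota g (O.delta π f))
    = ∑ i ∈ range (m + 1 + 1), ((-1 : k) ^ (i * n)) •
        ((((-1 : k) ^ m) • (O.cc (O.cc π 0 f : Q (m + 1)) i g : Q (m + n + 1))
            + (O.cc (O.cc π 1 f : Q (m + 1)) i g : Q (m + n + 1)))
          - ∑ p ∈ range (m + 1), ((-1 : k) ^ p) •
              (O.cc (O.cc f p π : Q (m + 1)) i g : Q (m + n + 1))) := by
  rw [O.iota_cc h1 g (O.delta π f)]
  refine Finset.sum_congr rfl fun i hi => ?_
  congr 1
  rw [O.delta_cc π f, O.cc_sub_left, O.cc_add_left, O.cc_smul_left, O.cc_sum_left]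
  congr 1
  exact Finset.sum_congr rfl fun p _ => by rw [O.cc_smul_left]

lemma expandR2 {m n : ℕ} (f : Q m) (g : Q n) (h2 : m + (n + 1) = m + n + 1) :
    tr h2 (O.iota (O.delta π g) f)
    = ∑ i ∈ range (m + 1), ((-1 : k) ^ (i * (n + 1))) •
        ((((-1 : k) ^ n) • (O.cc (O.cc f i π : Q (m + 1)) i g : Q (m + n + 1))
            + (O.cc (O.cc f i π : Q (m + 1)) (i + 1) g : Q (m + n + 1)))
          - ∑ r ∈ range (n + 1), ((-1 : k) ^ r) •
              (O.cc f i (O.cc g r π : Q (n + 1)) : Q (m + n + 1))) := by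
  rw [O.iota_cc h2 (O.delta π g) f]
  refine Finset.sum_congr rfl fun i hi => ?_
  rw [Finset.mem_range] at hi
  congr 1
  rw [O.delta_cc π g, O.cc_sub_right, O.cc_add_right, O.cc_smul_right, O.cc_sum_right]
  congr 2
  · congr 1
    rw [O.ccA (by omega : 1 + n = n + 1) rfl f π g i 0 (by omega) (by omega), add_zero]
  · rw [O.ccA (by omega : 1 + n = n + 1) rfl f π g i 1 (by omega) (by omega)]
  · funext r
    rw [O.cc_smul_right]

lemma expandR3 {m n : ℕ} (f : Q m) (g : Q n) :
    O.cup π f g = (O.cc (O.cc π 0 f : Q (m + 1)) (m + 1) g : Q (m + n + 1)) := by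
  rw [O.cup_cc, ← O.ccP (by omega : 1 + m = m + 1) rfl π f g 0 1 (by omega) (by omega),
    Nat.add_comm 1 m]

lemma expandR4 {m n : ℕ} (f : Q m) (g : Q n) (h3 : n + m + 1 = m + n + 1) :
    tr h3 (O.cup π g f) = (O.cc (O.cc π 1 f : Q (m + 1)) 0 g : Q (m + n + 1)) := by
  rw [O.cup_cc π g f, O.tr_cc]
  conv_rhs => rw [← O.tr_cc (show 1 + m = m + 1 by omega) π 1 f]
  rw [O.cc_tr_left]

lemma final_comb {V : Type*} [AddCommGroup V] [Module k V] (sn sP0 : k)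
    (SP0L SP1L X Y SA SB SC SD SE SF P0last P10 : V)
    (e1 : sn • SA - sP0 • P0last = SP0L)
    (e2 : sn • SB - sn • P10 = SP1L)
    (e3 : (-sn) • SC + SD + SE = -X)
    (e4 : -SF = -Y) :
    SP0L + SP1L - (X + Y) = sn • (SA + SB - SC) + (SD + SE - SF) - sP0 • P0last - sn • P10 := by
  have hX : X = sn • SC - SD - SE := by
    rw [← neg_inj, ← e3, neg_smul]
    abel
  have hY : Y = SF := (neg_inj.mp e4).symm
  rw [← e1, ← e2, hX, hY]
  module

theorem homotopy {m n : ℕ} (f : Q m) (g : Q n) :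
    O.delta π (O.iota g f)
    = ((-1 : k) ^ n) • tr (by omega : m + 1 + n = m + n + 1) (O.iota g (O.delta π f))
      + tr (by omega : m + (n + 1) = m + n + 1) (O.iota (O.delta π g) f)
      - ((-1 : k) ^ (m * (n + 1))) • O.cup π f g
      - ((-1 : k) ^ n) • tr (by omega : n + m + 1 = m + n + 1) (O.cup π g f) := by
  rw [O.expandL π f g, O.expandR1 π f g (by omega), O.expandR2 π f g (by omega),
    O.expandR3 π f g, O.expandR4 π f g (by omega)]
  -- regroup the LHS third sum into CC and DD parts
  have hd0 : ∀ i ∈ range (m + 1), ((-1 : k) ^ (i * n)) •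
        ((∑ j ∈ range (m + 1), if j < i then
            ((-1 : k) ^ j) • (O.cc (O.cc f j π : Q (m + 1)) (i + 1) g : Q (m + n + 1)) else 0)
          + (∑ r ∈ range (n + 1),
            ((-1 : k) ^ (i + r)) • (O.cc f i (O.cc g r π : Q (n + 1)) : Q (m + n + 1)))
          + (∑ p ∈ range (m + 1), if i < p then
            ((-1 : k) ^ (p + n)) • (O.cc (O.cc f p π : Q (m + 1)) i g : Q (m + n + 1)) else 0))
      = ((-1 : k) ^ (i * n)) •
          ((∑ j ∈ range (m + 1), if j < i then
              ((-1 : k) ^ j) • (O.cc (O.cc f j π : Q (m + 1)) (i + 1) g : Q (m + n + 1)) else 0)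
            + ∑ p ∈ range (m + 1), if i < p then
              ((-1 : k) ^ (p + n)) • (O.cc (O.cc f p π : Q (m + 1)) i g : Q (m + n + 1)) else 0)
        + ∑ r ∈ range (n + 1), (((-1 : k) ^ (i * n)) * ((-1 : k) ^ (i + r))) •
            (O.cc f i (O.cc g r π : Q (n + 1)) : Q (m + n + 1)) := by
    intro i _
    have hs2 : (∑ r ∈ range (n + 1), (((-1 : k) ^ (i * n)) * ((-1 : k) ^ (i + r))) •
          (O.cc f i (O.cc g r π : Q (n + 1)) : Q (m + n + 1)))
        = ((-1 : k) ^ (i * n)) • ∑ r ∈ range (n + 1), ((-1 : k) ^ (i + r)) •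
            (O.cc f i (O.cc g r π : Q (n + 1)) : Q (m + n + 1)) := by
      rw [Finset.smul_sum]
      exact Finset.sum_congr rfl fun r _ => (smul_smul _ _ _).symm
    rw [hs2, ← smul_add]
    congr 1
    abel
  rw [Finset.sum_congr rfl hd0, Finset.sum_add_distrib]
  -- regroup R1
  have hd1 : ∀ i ∈ range (m + 1 + 1), ((-1 : k) ^ (i * n)) •
        ((((-1 : k) ^ m) • (O.cc (O.cc π 0 f : Q (m + 1)) i g : Q (m + n + 1))
            + (O.cc (O.cc π 1 f : Q (m + 1)) i g : Q (m + n + 1)))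
          - ∑ p ∈ range (m + 1), ((-1 : k) ^ p) •
              (O.cc (O.cc f p π : Q (m + 1)) i g : Q (m + n + 1)))
      = ((((-1 : k) ^ (i * n)) * ((-1 : k) ^ m)) •
            (O.cc (O.cc π 0 f : Q (m + 1)) i g : Q (m + n + 1))
          + ((-1 : k) ^ (i * n)) • (O.cc (O.cc π 1 f : Q (m + 1)) i g : Q (m + n + 1)))
        - ∑ p ∈ range (m + 1), (((-1 : k) ^ (i * n)) * ((-1 : k) ^ p)) •
            (O.cc (O.cc f p π : Q (m + 1)) i g : Q (m + n + 1)) := by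
    intro i _
    have hsp : (∑ p ∈ range (m + 1), (((-1 : k) ^ (i * n)) * ((-1 : k) ^ p)) •
          (O.cc (O.cc f p π : Q (m + 1)) i g : Q (m + n + 1)))
        = ((-1 : k) ^ (i * n)) • ∑ p ∈ range (m + 1), ((-1 : k) ^ p) •
            (O.cc (O.cc f p π : Q (m + 1)) i g : Q (m + n + 1)) := by
      rw [Finset.smul_sum]
      exact Finset.sum_congr rfl fun p _ => (smul_smul _ _ _).symm
    rw [hsp, ← smul_smul, ← smul_add, ← smul_sub]
  rw [Finset.sum_congr rfl hd1, Finset.sum_sub_distrib, Finset.sum_add_distrib]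
  -- regroup R2
  have hd2 : ∀ i ∈ range (m + 1), ((-1 : k) ^ (i * (n + 1))) •
        ((((-1 : k) ^ n) • (O.cc (O.cc f i π : Q (m + 1)) i g : Q (m + n + 1))
            + (O.cc (O.cc f i π : Q (m + 1)) (i + 1) g : Q (m + n + 1)))
          - ∑ r ∈ range (n + 1), ((-1 : k) ^ r) •
              (O.cc f i (O.cc g r π : Q (n + 1)) : Q (m + n + 1)))
      = ((((-1 : k) ^ (i * (n + 1))) * ((-1 : k) ^ n)) •
            (O.cc (O.cc f i π : Q (m + 1)) i g : Q (m + n + 1))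
          + ((-1 : k) ^ (i * (n + 1))) • (O.cc (O.cc f i π : Q (m + 1)) (i + 1) g : Q (m + n + 1)))
        - ∑ r ∈ range (n + 1), (((-1 : k) ^ (i * (n + 1))) * ((-1 : k) ^ r)) •
            (O.cc f i (O.cc g r π : Q (n + 1)) : Q (m + n + 1)) := by
    intro i _
    have hsr : (∑ r ∈ range (n + 1), (((-1 : k) ^ (i * (n + 1))) * ((-1 : k) ^ r)) •
          (O.cc f i (O.cc g r π : Q (n + 1)) : Q (m + n + 1)))
        = ((-1 : k) ^ (i * (n + 1))) • ∑ r ∈ range (n + 1), ((-1 : k) ^ r) •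
            (O.cc f i (O.cc g r π : Q (n + 1)) : Q (m + n + 1)) := by
      rw [Finset.smul_sum]
      exact Finset.sum_congr rfl fun r _ => (smul_smul _ _ _).symm
    rw [hsr, ← smul_smul, ← smul_add, ← smul_sub]
  rw [Finset.sum_congr rfl hd2, Finset.sum_sub_distrib, Finset.sum_add_distrib]
  -- now apply the family lemmas via final_comb
  refine final_comb (k := k) (V := Q (m + n + 1)) ((-1 : k) ^ n) ((-1 : k) ^ (m * (n + 1)))
    _ _ _ _ _ _ _ _ _ _ _ _ ?_ ?_ ?_ ?_
  · exact Hfam_P0 m n (fun j => (O.cc (O.cc π 0 f : Q (m + 1)) j g : Q (m + n + 1)))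
  · exact Hfam_P1 m n (fun j => (O.cc (O.cc π 1 f : Q (m + 1)) j g : Q (m + n + 1)))
  · exact Hfam_CC m n (fun p q => (O.cc (O.cc f p π : Q (m + 1)) q g : Q (m + n + 1)))
  · exact Hfam_DD m n (fun i r => (O.cc f i (O.cc g r π : Q (n + 1)) : Q (m + n + 1)))
end NSOperad

end Homotopy

section DeltaDelta

open Finset

variable {k : Type*} [Field k]

lemma DDfam_F {V : Type*} [AddCommGroup V] [Module k V] (N : ℕ) (F : ℕ → ℕ → V) :
    (∑ i ∈ range N, ((-1 : k) ^ i) •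
        ∑ j ∈ range N, (if j < i then ((-1 : k) ^ j) • F j (i + 1) else 0))
      + (∑ i ∈ range N, ((-1 : k) ^ i) •
        ∑ p ∈ range N, (if i < p then ((-1 : k) ^ (p + 1)) • F i (p + 1) else 0)) = 0 := by
  have h1 : ∀ (c : ℕ → k) (G : ℕ → ℕ → V), ∑ i ∈ range N, (c i) •
        ∑ j ∈ range N, (if j < i then ((-1 : k) ^ j) • G j i else 0)
      = ∑ i ∈ range N, ∑ j ∈ range N,
          (if j < i then ((c i) * ((-1 : k) ^ j)) • G j i else 0) := by
    intro c G
    refine Finset.sum_congr rfl fun i _ => ?_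
    rw [Finset.smul_sum]
    refine Finset.sum_congr rfl fun j _ => ?_
    by_cases hj : j < i
    · rw [if_pos hj, if_pos hj, smul_smul]
    · rw [if_neg hj, if_neg hj, smul_zero]
  have h2 : ∑ i ∈ range N, ((-1 : k) ^ i) •
        ∑ p ∈ range N, (if i < p then ((-1 : k) ^ (p + 1)) • F i (p + 1) else 0)
      = ∑ i ∈ range N, ∑ j ∈ range N,
          (if j < i then (((-1 : k) ^ j) * ((-1 : k) ^ (i + 1))) • F j (i + 1) else 0) := by
    have step : ∑ i ∈ range N, ((-1 : k) ^ i) •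
          ∑ p ∈ range N, (if i < p then ((-1 : k) ^ (p + 1)) • F i (p + 1) else 0)
        = ∑ i ∈ range N, ∑ p ∈ range N,
            (if i < p then (((-1 : k) ^ i) * ((-1 : k) ^ (p + 1))) • F i (p + 1) else 0) := by
      refine Finset.sum_congr rfl fun i _ => ?_
      rw [Finset.smul_sum]
      refine Finset.sum_congr rfl fun p _ => ?_
      by_cases hp : i < p
      · rw [if_pos hp, if_pos hp, smul_smul]
      · rw [if_neg hp, if_neg hp, smul_zero]
    rw [step, Finset.sum_comm]
  rw [h1 (fun i => ((-1 : k) ^ i)) (fun j i => F j (i + 1)), h2, ← Finset.sum_add_distrib]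
  refine Finset.sum_eq_zero fun i _ => ?_
  rw [← Finset.sum_add_distrib]
  refine Finset.sum_eq_zero fun j _ => ?_
  by_cases hj : j < i
  · rw [if_pos hj, if_pos hj, ← add_smul]
    convert zero_smul k (F j (i + 1))
    rw [pow_succ]
    ring
  · rw [if_neg hj, if_neg hj, add_zero]

namespace NSOperad

set_option linter.unusedSectionVars false
set_option maxHeartbeats 1000000

variable {Q : ℕ → Type*}
  [∀ n, AddCommGroup (Q n)] [∀ n, Module k (Q n)] (O : NSOperad k Q) (π : Q 1)

lemma cc_mult (hπ : O.IsMult π) : (O.cc π 0 π : Q 2) = O.cc π 1 π := by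
  have h0 := O.comp_eq_cc rfl π (0 : Fin 2) π
  have h1 := O.comp_eq_cc rfl π (1 : Fin 2) π
  simp only [Fin.val_zero, Fin.val_one] at h0 h1
  rw [← h0, ← h1]
  exact hπ

lemma delta_delta (hπ : O.IsMult π) {s : ℕ} (x : Q s) :
    O.delta π (O.delta π x) = 0 := by
  have hcc := O.cc_mult π hπ
  -- the three boundary identities
  have bd1 : (O.cc (O.cc π 0 x : Q (s + 1)) (s + 1) π : Q (s + 1 + 1))
      = O.cc (O.cc π 0 π : Q 2) 0 x := by
    have h := O.ccP (p := s + 1 + 1) (by omega : 1 + s = s + 1) (by omega : 1 + 1 = 2) π x π 0 1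
      (by omega) (by omega)
    rw [Nat.add_comm 1 s] at h
    rw [h, ← hcc]
  have bd2 : (O.cc (O.cc π 1 x : Q (s + 1)) 0 π : Q (s + 1 + 1))
      = O.cc (O.cc π 0 π : Q 2) 2 x := by
    have h := O.ccP (p := s + 1 + 1) (by omega : 1 + 1 = 2) (by omega : 1 + s = s + 1) π π x 0 1
      (by omega) (by omega)
    rw [show (1 : ℕ) + 1 = 2 by norm_num] at h
    exact h.symm
  -- expansions of the three parts of the outer delta
  have e00 : (O.cc π 0 (O.cc π 0 x : Q (s + 1)) : Q (s + 1 + 1))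
      = O.cc (O.cc π 0 π : Q 2) 0 x := by
    rw [O.ccA (by omega : 1 + s = s + 1) (by omega : 1 + 1 = 2) π π x 0 0 (by omega) (by omega)]
  have e01 : (O.cc π 0 (O.cc π 1 x : Q (s + 1)) : Q (s + 1 + 1))
      = O.cc (O.cc π 0 π : Q 2) 1 x := by
    rw [O.ccA (by omega : 1 + s = s + 1) (by omega : 1 + 1 = 2) π π x 0 1 (by omega) (by omega),
      zero_add]
  have e10 : (O.cc π 1 (O.cc π 0 x : Q (s + 1)) : Q (s + 1 + 1))
      = O.cc (O.cc π 0 π : Q 2) 1 x := by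
    rw [O.ccA (by omega : 1 + s = s + 1) (by omega : 1 + 1 = 2) π π x 1 0 (by omega) (by omega),
      ← hcc, add_zero]
  have e11 : (O.cc π 1 (O.cc π 1 x : Q (s + 1)) : Q (s + 1 + 1))
      = O.cc (O.cc π 0 π : Q 2) 2 x := by
    rw [O.ccA (by omega : 1 + s = s + 1) (by omega : 1 + 1 = 2) π π x 1 1 (by omega) (by omega),
      ← hcc]
  have hE0 : (O.cc π 0 (O.delta π x) : Q (s + 1 + 1))
      = ((-1 : k) ^ s) • (O.cc (O.cc π 0 π : Q 2) 0 x : Q (s + 1 + 1))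
        + (O.cc (O.cc π 0 π : Q 2) 1 x : Q (s + 1 + 1))
        - ∑ i ∈ range (s + 1), ((-1 : k) ^ i) •
            (O.cc (O.cc π 0 x : Q (s + 1)) i π : Q (s + 1 + 1)) := by
    rw [O.delta_cc π x, O.cc_sub_right, O.cc_add_right, O.cc_smul_right, O.cc_sum_right,
      e00, e01]
    congr 1
    refine Finset.sum_congr rfl fun i hi => ?_
    rw [Finset.mem_range] at hi
    rw [O.cc_smul_right, O.ccA (by omega : s + 1 = s + 1) (by omega : 1 + s = s + 1) π x π 0 i
      (by omega) (by omega), zero_add]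
  have hE1 : (O.cc π 1 (O.delta π x) : Q (s + 1 + 1))
      = ((-1 : k) ^ s) • (O.cc (O.cc π 0 π : Q 2) 1 x : Q (s + 1 + 1))
        + (O.cc (O.cc π 0 π : Q 2) 2 x : Q (s + 1 + 1))
        - ∑ i ∈ range (s + 1), ((-1 : k) ^ i) •
            (O.cc (O.cc π 1 x : Q (s + 1)) (i + 1) π : Q (s + 1 + 1)) := by
    rw [O.delta_cc π x, O.cc_sub_right, O.cc_add_right, O.cc_smul_right, O.cc_sum_right,
      e10, e11]
    congr 1
    refine Finset.sum_congr rfl fun i hi => ?_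
    rw [Finset.mem_range] at hi
    rw [O.cc_smul_right, O.ccA (by omega : s + 1 = s + 1) (by omega : 1 + s = s + 1) π x π 1 i
      (by omega) (by omega), Nat.add_comm 1 i]
  have hcc2 : (O.cc π 0 π : Q (1 + 1)) = O.cc π 1 π := hcc
  have hZ : ∀ i : ℕ, (∑ r ∈ range (1 + 1),
        ((-1 : k) ^ (i + r)) • (O.cc x i (O.cc π r π : Q (1 + 1)) : Q (s + 1 + 1))) = 0 := by
    intro i
    rw [Finset.sum_range_succ, Finset.sum_range_one, ← hcc2, add_zero, pow_succ, mul_neg_one,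
      neg_smul, add_neg_cancel]
  -- the expansion of the j-sum part of the outer delta
  have hE2 : (∑ j ∈ range (s + 1 + 1),
        ((-1 : k) ^ j) • (O.cc (O.delta π x) j π : Q (s + 1 + 1)))
      = (((-1 : k) ^ s) • (∑ j ∈ range (s + 1), ((-1 : k) ^ j) •
            (O.cc (O.cc π 0 x : Q (s + 1)) j π : Q (s + 1 + 1)))
          - (O.cc (O.cc π 0 π : Q 2) 0 x : Q (s + 1 + 1)))
        + (- (∑ j ∈ range (s + 1), ((-1 : k) ^ j) •
            (O.cc (O.cc π 1 x : Q (s + 1)) (j + 1) π : Q (s + 1 + 1)))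
          + (O.cc (O.cc π 0 π : Q 2) 2 x : Q (s + 1 + 1)))
        - ((∑ i ∈ range (s + 1), ((-1 : k) ^ i) •
              ∑ j ∈ range (s + 1), (if j < i then ((-1 : k) ^ j) •
                (O.cc (O.cc x j π : Q (s + 1)) (i + 1) π : Q (s + 1 + 1)) else 0))
            + ∑ i ∈ range (s + 1), ((-1 : k) ^ i) •
              ∑ p ∈ range (s + 1), (if i < p then ((-1 : k) ^ (p + 1)) •
                (O.cc (O.cc x i π : Q (s + 1)) (p + 1) π : Q (s + 1 + 1)) else 0)) := by
    have step1 : ∀ j ∈ range (s + 1 + 1),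
        ((-1 : k) ^ j) • (O.cc (O.delta π x) j π : Q (s + 1 + 1))
        = (((-1 : k) ^ j) * ((-1 : k) ^ s)) • (O.cc (O.cc π 0 x : Q (s + 1)) j π : Q (s + 1 + 1))
          + ((-1 : k) ^ j) • (O.cc (O.cc π 1 x : Q (s + 1)) j π : Q (s + 1 + 1))
          - ∑ i ∈ range (s + 1), (((-1 : k) ^ j) * ((-1 : k) ^ i)) •
              (O.cc (O.cc x i π : Q (s + 1)) j π : Q (s + 1 + 1)) := by
      intro j _
      rw [O.delta_cc π x, O.cc_sub_left, O.cc_add_left, O.cc_smul_left, O.cc_sum_left,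
        smul_sub, smul_add, smul_smul, Finset.smul_sum]
      congr 1
      refine Finset.sum_congr rfl fun i _ => ?_
      rw [O.cc_smul_left, smul_smul]
    rw [Finset.sum_congr rfl step1, Finset.sum_sub_distrib, Finset.sum_add_distrib]
    congr 1
    · congr 1
      -- the X0 part with boundary
      · have hpt : ∀ j ∈ range (s + 1 + 1),
            (((-1 : k) ^ j) * ((-1 : k) ^ s)) •
              (O.cc (O.cc π 0 x : Q (s + 1)) j π : Q (s + 1 + 1))
            = ((-1 : k) ^ s) • (((-1 : k) ^ j) •
              (O.cc (O.cc π 0 x : Q (s + 1)) j π : Q (s + 1 + 1))) := by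
          intro j _
          rw [smul_smul, mul_comm]
        rw [Finset.sum_congr rfl hpt, ← Finset.smul_sum, Finset.sum_range_succ, bd1, smul_add,
          smul_smul]
        have hs : ((-1 : k) ^ s) * ((-1 : k) ^ (s + 1)) = -1 := by
          rw [pow_succ]
          linear_combination (-1 : k) * (sq_pow (k := k) (a := s))
        rw [hs, neg_one_smul]
        rw [sub_eq_add_neg]
      -- the X1 part with boundary
      · rw [Finset.sum_range_succ', bd2]
        have hpt : ∀ j ∈ range (s + 1),
            ((-1 : k) ^ (j + 1)) • (O.cc (O.cc π 1 x : Q (s + 1)) (j + 1) π : Q (s + 1 + 1))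
            = - (((-1 : k) ^ j) •
                (O.cc (O.cc π 1 x : Q (s + 1)) (j + 1) π : Q (s + 1 + 1))) := by
          intro j _
          rw [pow_succ, mul_neg_one, neg_smul]
        rw [Finset.sum_congr rfl hpt, Finset.sum_neg_distrib, pow_zero, one_smul]
    -- the F part
    · have hswap : ∀ j ∈ range (s + 1 + 1),
          (∑ i ∈ range (s + 1), (((-1 : k) ^ j) * ((-1 : k) ^ i)) •
            (O.cc (O.cc x i π : Q (s + 1)) j π : Q (s + 1 + 1)))
          = ∑ i ∈ range (s + 1), ((-1 : k) ^ i) • (((-1 : k) ^ j) •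
              (O.cc (O.cc x i π : Q (s + 1)) j π : Q (s + 1 + 1))) := by
        intro j _
        refine Finset.sum_congr rfl fun i _ => ?_
        rw [smul_smul]
        congr 1
        ring
      rw [Finset.sum_congr rfl hswap, Finset.sum_comm]
      have hin : ∀ i ∈ range (s + 1), (∑ j ∈ range (s + 1 + 1), ((-1 : k) ^ i) •
            (((-1 : k) ^ j) • (O.cc (O.cc x i π : Q (s + 1)) j π : Q (s + 1 + 1))))
          = ((-1 : k) ^ i) •
              ((∑ j ∈ range (s + 1), (if j < i then ((-1 : k) ^ j) •
                (O.cc (O.cc x j π : Q (s + 1)) (i + 1) π : Q (s + 1 + 1)) else 0))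
              + ∑ p ∈ range (s + 1), (if i < p then ((-1 : k) ^ (p + 1)) •
                (O.cc (O.cc x i π : Q (s + 1)) (p + 1) π : Q (s + 1 + 1)) else 0)) := by
        intro i hi
        rw [Finset.mem_range] at hi
        rw [← Finset.smul_sum, O.inner_split π x π (by omega : i ≤ s), hZ i, add_zero]
        congr 2
        refine Finset.sum_congr rfl fun p hp => ?_
        rw [Finset.mem_range] at hp
        by_cases hip : i < p
        · rw [if_pos hip, if_pos hip,
            O.ccP (by omega : s + 1 = s + 1) (by omega : s + 1 = s + 1) x π π i p hip (by omega)]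
        · rw [if_neg hip, if_neg hip]
      rw [Finset.sum_congr rfl hin]
      have hdist : ∀ i ∈ range (s + 1), ((-1 : k) ^ i) •
            ((∑ j ∈ range (s + 1), (if j < i then ((-1 : k) ^ j) •
                (O.cc (O.cc x j π : Q (s + 1)) (i + 1) π : Q (s + 1 + 1)) else 0))
              + ∑ p ∈ range (s + 1), (if i < p then ((-1 : k) ^ (p + 1)) •
                (O.cc (O.cc x i π : Q (s + 1)) (p + 1) π : Q (s + 1 + 1)) else 0))
          = ((-1 : k) ^ i) •
              (∑ j ∈ range (s + 1), (if j < i then ((-1 : k) ^ j) •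
                (O.cc (O.cc x j π : Q (s + 1)) (i + 1) π : Q (s + 1 + 1)) else 0))
            + ((-1 : k) ^ i) •
              (∑ p ∈ range (s + 1), (if i < p then ((-1 : k) ^ (p + 1)) •
                (O.cc (O.cc x i π : Q (s + 1)) (p + 1) π : Q (s + 1 + 1)) else 0)) :=
        fun i _ => smul_add _ _ _
      rw [Finset.sum_congr rfl hdist, Finset.sum_add_distrib]
  -- final assembly
  rw [O.delta_cc π (O.delta π x), hE0, hE1, hE2]
  have hF := DDfam_F (k := k) (s + 1)
    (fun a b => (O.cc (O.cc x a π : Q (s + 1)) b π : Q (s + 1 + 1)))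
  rw [hF, sub_zero]
  match_scalars
  · rw [pow_succ]
    linear_combination (-1 : k) * (sq_pow (k := k) (a := s))
  · rw [pow_succ]
    ring
  · rw [pow_succ]
    ring
  · ring
  · ring

end NSOperad

end DeltaDelta

section Assembly

open Finset

namespace NSOperad

set_option linter.unusedSectionVars false
set_option maxHeartbeats 1000000

variable {k : Type*} [Field k] {Q : ℕ → Type*}
  [∀ n, AddCommGroup (Q n)] [∀ n, Module k (Q n)] (O : NSOperad k Q) (π : Q 1)

lemma tr_zero {a b : ℕ} (h : a = b) : tr h (0 : Q a) = 0 := by subst h; rfl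

lemma delta_add {a : ℕ} (x y : Q a) :
    O.delta π (x + y) = O.delta π x + O.delta π y := by
  rw [O.delta_cc π x, O.delta_cc π y, O.delta_cc π (x + y), O.cc_add_right, O.cc_add_right]
  have hpt : ∀ i ∈ range (a + 1), ((-1 : k) ^ i) • (O.cc (x + y) i π : Q (a + 1))
      = ((-1 : k) ^ i) • (O.cc x i π : Q (a + 1)) + ((-1 : k) ^ i) • O.cc y i π :=
    fun i _ => by rw [O.cc_add_left, smul_add]
  rw [Finset.sum_congr rfl hpt, Finset.sum_add_distrib, smul_add]
  abel

lemma delta_smul {a : ℕ} (c : k) (x : Q a) :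
    O.delta π (c • x) = c • O.delta π x := by
  rw [O.delta_cc π x, O.delta_cc π (c • x), O.cc_smul_right, O.cc_smul_right, smul_sub,
    smul_add, Finset.smul_sum]
  congr 1
  · rw [smul_comm]
  · exact Finset.sum_congr rfl fun i _ => by rw [O.cc_smul_left, smul_comm]

lemma delta_sub {a : ℕ} (x y : Q a) :
    O.delta π (x - y) = O.delta π x - O.delta π y := by
  rw [sub_eq_add_neg, O.delta_add, ← neg_one_smul k y, O.delta_smul, neg_one_smul,
    ← sub_eq_add_neg]

lemma delta_tr {a b : ℕ} (h : a = b) (h' : a + 1 = b + 1) (x : Q a) :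
    O.delta π (tr h x) = tr h' (O.delta π x) := by subst h; rfl

lemma iota_zerof {a b : ℕ} (g : Q b) : O.iota g (0 : Q a) = (0 : Q (a + b)) := by
  rw [O.iota_cc']
  exact Finset.sum_eq_zero fun i _ => by rw [O.cc_zero_left, smul_zero]

lemma iota_zerog {a b : ℕ} (f : Q a) : O.iota (0 : Q b) f = (0 : Q (a + b)) := by
  rw [O.iota_cc']
  exact Finset.sum_eq_zero fun i _ => by rw [O.cc_zero_right, smul_zero]

end NSOperad

end Assembly

theorem delta_of_fn_bracket {k : Type*} [Field k] {Q : ℕ → Type*}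
    [∀ n, AddCommGroup (Q n)] [∀ n, Module k (Q n)] (O : NSOperad k Q)
    (π : Q 1) (hπ : O.IsMult π) {m n : ℕ} (f : Q m) (g : Q n) :
    O.delta π (O.fn π f g) =
      tr (by omega : m + 1 + (n + 1) = m + n + 1 + 1) (O.gv (O.delta π f) (O.delta π g)) := by
  have hδδf : O.delta π (O.delta π f) = 0 := O.delta_delta π hπ f
  have hH := O.homotopy π f g
  have hFN : O.fn π f g
      = ((-1 : k) ^ (m * n + m + n)) •
          tr (by omega : m + 1 + n = m + n + 1) (O.iota g (O.delta π f))
        + ((-1 : k) ^ (m + 1)) •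
          tr (by omega : n + (m + 1) = m + n + 1) (O.iota (O.delta π f) g)
        - ((-1 : k) ^ (m * n + m)) • O.delta π (O.iota g f) := by
    rw [fn, cupBracket, hH]
    match_scalars
    all_goals ring_nf
    all_goals try simp only [npow_mul2]
    all_goals ring1
  rw [hFN, O.delta_sub, O.delta_add, O.delta_smul, O.delta_smul, O.delta_smul,
    O.delta_tr π (show m + 1 + n = m + n + 1 by omega)
      (show m + 1 + n + 1 = m + n + 1 + 1 by omega) (O.iota g (O.delta π f)),
    O.delta_tr π (show n + (m + 1) = m + n + 1 by omega)
      (show n + (m + 1) + 1 = m + n + 1 + 1 by omega) (O.iota (O.delta π f) g),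
    O.delta_delta π hπ (O.iota g f), smul_zero, sub_zero]
  have hHu := O.homotopy π (O.delta π f) g
  rw [hδδf, O.iota_zerof, tr_zero, smul_zero, zero_add] at hHu
  have hHg := O.homotopy π g (O.delta π f)
  rw [hδδf, O.iota_zerog, tr_zero, add_zero] at hHg
  rw [hHu, hHg, gv]
  simp only [tr_add, tr_sub, tr_smul, tr_tr, tr_zero]
  match_scalars
  all_goals ring_nf
  all_goals try simp only [npow_mul2]
  all_goals ring1
end

section
/- Let N ∈ P_1 be a Nijenhuis element for a multiplication π on a nonsymmetric operad P. Then π_N := π ∘_1 N + π ∘_2 N − N ∘_1 π is also a multiplication on P (i.e., π_N ∘_1 π_N = π_N ∘_2 π_N), and N is a map from π_N to π in the sense that N ∘_1 π_N = (π ∘_2 N) ∘_1 N. -/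
open NSOperad

section Aux

variable {k : Type*} [Field k] {Q : ℕ → Type*}
  [∀ n, AddCommGroup (Q n)] [∀ n, Module k (Q n)] (O : NSOperad k Q)

lemma NSOperad.comp_sub_left' {m n p : ℕ} (h : m + n = p) (f f' : Q m) (i : Fin (m + 1))
    (g : Q n) : O.comp h (f - f') i g = O.comp h f i g - O.comp h f' i g := by
  rw [sub_eq_add_neg, ← neg_one_smul k f', O.comp_add_left, O.comp_smul_left,
    neg_one_smul, ← sub_eq_add_neg]

lemma NSOperad.comp_sub_right' {m n p : ℕ} (h : m + n = p) (f : Q m) (i : Fin (m + 1))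
    (g g' : Q n) : O.comp h f i (g - g') = O.comp h f i g - O.comp h f i g' := by
  rw [sub_eq_add_neg, ← neg_one_smul k g', O.comp_add_right, O.comp_smul_right,
    neg_one_smul, ← sub_eq_add_neg]

end Aux

theorem deformed_multiplication_of_nijenhuis {k : Type*} [Field k] {Q : ℕ → Type*}
    [∀ n, AddCommGroup (Q n)] [∀ n, Module k (Q n)] (O : NSOperad k Q)
    (π : Q 1) (hπ : O.IsMult π) (N : Q 0) (hN : O.IsNijenhuisFor π N) :
    O.IsMult (O.piDef π N) ∧
    O.comp rfl N 0 (O.piDef π N) = O.comp rfl (O.comp rfl π 1 N) 0 N := by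
  have hπ' : O.comp rfl π 0 π = O.comp rfl π 1 π := hπ
  have hN' : O.comp rfl (O.comp rfl π 1 N) 0 N = O.comp rfl N 0 (O.piDef π N) := hN
  have hPd : O.piDef π N
      = O.comp rfl π 0 N + O.comp rfl π 1 N - O.comp rfl N 0 π := rfl
  -- sequential associativity instances
  have s1 : O.comp rfl π 0 (O.comp rfl π 0 N)
      = O.comp rfl (O.comp rfl π 0 π) 0 N := O.assoc_seq rfl rfl rfl rfl π π N 0 0
  have s2 : O.comp rfl π 0 (O.comp rfl π 1 N)
      = O.comp rfl (O.comp rfl π 0 π) 1 N := O.assoc_seq rfl rfl rfl rfl π π N 0 1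
  have s3 : O.comp rfl π 0 (O.comp rfl N 0 π)
      = O.comp rfl (O.comp rfl π 0 N) 0 π := O.assoc_seq rfl rfl rfl rfl π N π 0 0
  have s4 : O.comp rfl π 1 (O.comp rfl π 0 N)
      = O.comp rfl (O.comp rfl π 1 π) 1 N := O.assoc_seq rfl rfl rfl rfl π π N 1 0
  have s5 : O.comp rfl π 1 (O.comp rfl π 1 N)
      = O.comp rfl (O.comp rfl π 1 π) 2 N := O.assoc_seq rfl rfl rfl rfl π π N 1 1
  have s6 : O.comp rfl π 1 (O.comp rfl N 0 π)
      = O.comp rfl (O.comp rfl π 1 N) 1 π := O.assoc_seq rfl rfl rfl rfl π N π 1 0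
  have s7 : O.comp rfl (O.comp rfl π 0 N) 0 (O.piDef π N)
      = O.comp rfl π 0 (O.comp rfl N 0 (O.piDef π N)) :=
    (O.assoc_seq rfl rfl rfl rfl π N (O.piDef π N) 0 0).symm
  have s8 : O.comp rfl (O.comp rfl N 0 π) 0 (O.piDef π N)
      = O.comp rfl N 0 (O.comp rfl π 0 (O.piDef π N)) :=
    (O.assoc_seq rfl rfl rfl rfl N π (O.piDef π N) 0 0).symm
  have s9 : O.comp rfl (O.comp rfl N 0 π) 1 (O.piDef π N)
      = O.comp rfl N 0 (O.comp rfl π 1 (O.piDef π N)) :=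
    (O.assoc_seq rfl rfl rfl rfl N π (O.piDef π N) 0 1).symm
  have s10 : O.comp rfl π 0 (O.comp rfl (O.comp rfl π 1 N) 0 N)
      = O.comp rfl (O.comp rfl π 0 (O.comp rfl π 1 N)) 0 N :=
    O.assoc_seq rfl rfl rfl rfl π (O.comp rfl π 1 N) N 0 0
  have s11 : O.comp rfl (O.comp rfl π 1 N) 1 (O.piDef π N)
      = O.comp rfl π 1 (O.comp rfl N 0 (O.piDef π N)) :=
    (O.assoc_seq rfl rfl rfl rfl π N (O.piDef π N) 1 0).symm
  have s12 : O.comp rfl π 1 (O.comp rfl (O.comp rfl π 1 N) 0 N)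
      = O.comp rfl (O.comp rfl π 1 (O.comp rfl π 1 N)) 1 N :=
    O.assoc_seq rfl rfl rfl rfl π (O.comp rfl π 1 N) N 1 0
  have s13 : O.comp rfl (O.comp rfl N 0 (O.piDef π N)) 0 π
      = O.comp rfl N 0 (O.comp rfl (O.piDef π N) 0 π) :=
    (O.assoc_seq rfl rfl rfl rfl N (O.piDef π N) π 0 0).symm
  have s14 : O.comp rfl (O.comp rfl N 0 (O.piDef π N)) 1 π
      = O.comp rfl N 0 (O.comp rfl (O.piDef π N) 1 π) :=
    (O.assoc_seq rfl rfl rfl rfl N (O.piDef π N) π 0 1).symm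
  have s15 : O.comp rfl (O.comp rfl N 0 π) 0 π
      = O.comp rfl N 0 (O.comp rfl π 0 π) :=
    (O.assoc_seq rfl rfl rfl rfl N π π 0 0).symm
  have s16 : O.comp rfl (O.comp rfl N 0 π) 1 π
      = O.comp rfl N 0 (O.comp rfl π 1 π) :=
    (O.assoc_seq rfl rfl rfl rfl N π π 0 1).symm
  -- parallel associativity instances
  have p1 : O.comp rfl (O.comp rfl π 1 N) 0 (O.piDef π N)
      = O.comp rfl (O.comp rfl π 0 (O.piDef π N)) 2 N :=
    (O.assoc_par (m:=1) (n:=1) (l:=0) rfl rfl rfl rfl π (O.piDef π N) N 0 1 (by decide)).symm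
  have p2 : O.comp rfl (O.comp rfl (O.comp rfl π 0 π) 0 N) 2 N
      = O.comp rfl (O.comp rfl (O.comp rfl π 0 π) 2 N) 0 N :=
    O.assoc_par (m:=2) (n:=0) (l:=0) rfl rfl rfl rfl (O.comp rfl π 0 π) N N 0 2 (by decide)
  have p3 : O.comp rfl (O.comp rfl (O.comp rfl π 0 π) 1 N) 2 N
      = O.comp rfl (O.comp rfl (O.comp rfl π 0 π) 2 N) 1 N :=
    O.assoc_par (m:=2) (n:=0) (l:=0) rfl rfl rfl rfl (O.comp rfl π 0 π) N N 1 2 (by decide)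
  have p4 : O.comp rfl (O.comp rfl (O.comp rfl π 0 N) 0 π) 2 N
      = O.comp rfl (O.comp rfl (O.comp rfl π 0 N) 1 N) 0 π :=
    O.assoc_par (m:=1) (n:=1) (l:=0) rfl rfl rfl rfl (O.comp rfl π 0 N) π N 0 1 (by decide)
  have p5 : O.comp rfl (O.comp rfl π 0 N) 1 N
      = O.comp rfl (O.comp rfl π 1 N) 0 N :=
    O.assoc_par (m:=1) (n:=0) (l:=0) rfl rfl rfl rfl π N N 0 1 (by decide)
  have p6 : O.comp rfl (O.comp rfl π 1 N) 0 π
      = O.comp rfl (O.comp rfl π 0 π) 2 N :=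
    (O.assoc_par (m:=1) (n:=1) (l:=0) rfl rfl rfl rfl π π N 0 1 (by decide)).symm
  have p7 : O.comp rfl (O.comp rfl π 0 N) 1 (O.piDef π N)
      = O.comp rfl (O.comp rfl π 1 (O.piDef π N)) 0 N :=
    O.assoc_par (m:=1) (n:=0) (l:=1) rfl rfl rfl rfl π N (O.piDef π N) 0 1 (by decide)
  have p8 : O.comp rfl (O.comp rfl (O.comp rfl π 1 N) 1 π) 0 N
      = O.comp rfl (O.comp rfl (O.comp rfl π 1 N) 0 N) 1 π :=
    (O.assoc_par (m:=1) (n:=0) (l:=1) rfl rfl rfl rfl (O.comp rfl π 1 N) N π 0 1 (by decide)).symm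
  have p9 : O.comp rfl (O.comp rfl π 0 N) 1 π
      = O.comp rfl (O.comp rfl π 1 π) 0 N :=
    O.assoc_par (m:=1) (n:=0) (l:=1) rfl rfl rfl rfl π N π 0 1 (by decide)
  -- expansions of composites with the deformed multiplication
  have hπ0P : O.comp rfl π 0 (O.piDef π N)
      = O.comp rfl (O.comp rfl π 0 π) 0 N + O.comp rfl (O.comp rfl π 0 π) 1 N
        - O.comp rfl (O.comp rfl π 0 N) 0 π := by
    rw [hPd, O.comp_sub_right', O.comp_add_right, s1, s2, s3]
  have hπ1P : O.comp rfl π 1 (O.piDef π N)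
      = O.comp rfl (O.comp rfl π 1 π) 1 N + O.comp rfl (O.comp rfl π 1 π) 2 N
        - O.comp rfl (O.comp rfl π 1 N) 1 π := by
    rw [hPd, O.comp_sub_right', O.comp_add_right, s4, s5, s6]
  have hP0π : O.comp rfl (O.piDef π N) 0 π
      = O.comp rfl (O.comp rfl π 0 N) 0 π + O.comp rfl (O.comp rfl π 0 π) 2 N
        - O.comp rfl N 0 (O.comp rfl π 0 π) := by
    rw [hPd, O.comp_sub_left', O.comp_add_left, p6, s15]
  have hP1π : O.comp rfl (O.piDef π N) 1 π
      = O.comp rfl (O.comp rfl π 1 π) 0 N + O.comp rfl (O.comp rfl π 1 N) 1 π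
        - O.comp rfl N 0 (O.comp rfl π 1 π) := by
    rw [hPd, O.comp_sub_left', O.comp_add_left, p9, s16]
  -- the six main terms
  have hA0 : O.comp rfl (O.comp rfl π 0 N) 0 (O.piDef π N)
      = O.comp rfl (O.comp rfl (O.comp rfl π 0 π) 1 N) 0 N := by
    rw [s7, ← hN', s10, s2]
  have hB0 : O.comp rfl (O.comp rfl π 1 N) 0 (O.piDef π N)
      = O.comp rfl (O.comp rfl (O.comp rfl π 0 π) 2 N) 0 N
        + O.comp rfl (O.comp rfl (O.comp rfl π 0 π) 2 N) 1 N
        - (O.comp rfl N 0 (O.comp rfl (O.comp rfl π 0 N) 0 π)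
           + O.comp rfl N 0 (O.comp rfl (O.comp rfl π 0 π) 2 N)
           - O.comp rfl N 0 (O.comp rfl N 0 (O.comp rfl π 0 π))) := by
    rw [p1, hπ0P, O.comp_sub_left', O.comp_add_left, p2, p3, p4, p5, hN', s13, hP0π,
      O.comp_sub_right', O.comp_add_right]
  have hC0 : O.comp rfl (O.comp rfl N 0 π) 0 (O.piDef π N)
      = O.comp rfl N 0 (O.comp rfl (O.comp rfl π 0 π) 0 N)
        + O.comp rfl N 0 (O.comp rfl (O.comp rfl π 0 π) 1 N)
        - O.comp rfl N 0 (O.comp rfl (O.comp rfl π 0 N) 0 π) := by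
    rw [s8, hπ0P, O.comp_sub_right', O.comp_add_right]
  have hA1 : O.comp rfl (O.comp rfl π 0 N) 1 (O.piDef π N)
      = O.comp rfl (O.comp rfl (O.comp rfl π 1 π) 1 N) 0 N
        + O.comp rfl (O.comp rfl (O.comp rfl π 1 π) 2 N) 0 N
        - (O.comp rfl N 0 (O.comp rfl (O.comp rfl π 1 π) 0 N)
           + O.comp rfl N 0 (O.comp rfl (O.comp rfl π 1 N) 1 π)
           - O.comp rfl N 0 (O.comp rfl N 0 (O.comp rfl π 1 π))) := by
    rw [p7, hπ1P, O.comp_sub_left', O.comp_add_left, p8, hN', s14, hP1π,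
      O.comp_sub_right', O.comp_add_right]
  have hB1 : O.comp rfl (O.comp rfl π 1 N) 1 (O.piDef π N)
      = O.comp rfl (O.comp rfl (O.comp rfl π 1 π) 2 N) 1 N := by
    rw [s11, ← hN', s12, s5]
  have hC1 : O.comp rfl (O.comp rfl N 0 π) 1 (O.piDef π N)
      = O.comp rfl N 0 (O.comp rfl (O.comp rfl π 1 π) 1 N)
        + O.comp rfl N 0 (O.comp rfl (O.comp rfl π 1 π) 2 N)
        - O.comp rfl N 0 (O.comp rfl (O.comp rfl π 1 N) 1 π) := by
    rw [s9, hπ1P, O.comp_sub_right', O.comp_add_right]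
  refine ⟨?_, hN'.symm⟩
  show O.comp rfl (O.piDef π N) 0 (O.piDef π N) = O.comp rfl (O.piDef π N) 1 (O.piDef π N)
  have hexp0 : O.comp rfl (O.piDef π N) 0 (O.piDef π N)
      = O.comp rfl (O.comp rfl π 0 N) 0 (O.piDef π N)
        + O.comp rfl (O.comp rfl π 1 N) 0 (O.piDef π N)
        - O.comp rfl (O.comp rfl N 0 π) 0 (O.piDef π N) := by
    show O.comp rfl (O.comp rfl π 0 N + O.comp rfl π 1 N - O.comp rfl N 0 π) 0
        (O.piDef π N) = _
    rw [O.comp_sub_left', O.comp_add_left]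
  have hexp1 : O.comp rfl (O.piDef π N) 1 (O.piDef π N)
      = O.comp rfl (O.comp rfl π 0 N) 1 (O.piDef π N)
        + O.comp rfl (O.comp rfl π 1 N) 1 (O.piDef π N)
        - O.comp rfl (O.comp rfl N 0 π) 1 (O.piDef π N) := by
    show O.comp rfl (O.comp rfl π 0 N + O.comp rfl π 1 N - O.comp rfl N 0 π) 1
        (O.piDef π N) = _
    rw [O.comp_sub_left', O.comp_add_left]
  rw [hexp0, hexp1, hA0, hB0, hC0, hA1, hB1, hC1, hπ']
  abel
end

section
/- Let R ∈ P_1 be a Rota–Baxter element of weight λ for a multiplication π on a nonsymmetric operad P. Then π_R := π ∘_1 R + π ∘_2 R + λπ is a multiplication on P, and the pair (π^l, π^r) with π^l := π ∘_1 R − R ∘_1 π and π^r := π ∘_2 R − R ∘_1 π is a representation of π_R, i.e., π^l ∘_1 π_R = π^l ∘_2 π^l, π^r ∘_1 π^l = π^l ∘_2 π^r, and π^r ∘_1 π^r = π^r ∘_2 π_R. -/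
namespace NSOperad
variable {k : Type*} [Field k] {Q : ℕ → Type*}
  [∀ n, AddCommGroup (Q n)] [∀ n, Module k (Q n)] (O : NSOperad k Q)

lemma comp_sub_left'_s18 {m n p : ℕ} (h : m + n = p) (f f' : Q m) (i : Fin (m+1)) (g : Q n) :
    O.comp h (f - f') i g = O.comp h f i g - O.comp h f' i g := by
  have h1 : f - f' = f + (-1 : k) • f' := by module
  rw [h1, O.comp_add_left, O.comp_smul_left, neg_one_smul]
  abel

lemma comp_sub_right'_s18 {m n p : ℕ} (h : m + n = p) (f : Q m) (i : Fin (m+1)) (g g' : Q n) :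
    O.comp h f i (g - g') = O.comp h f i g - O.comp h f i g' := by
  have h1 : g - g' = g + (-1 : k) • g' := by module
  rw [h1, O.comp_add_right, O.comp_smul_right, neg_one_smul]
  abel

-- (Z ∘₀ r) ∘₀ X = Z ∘₀ (r ∘₀ X)
lemma pE0 (Z X : Q 1) (r : Q 0) :
    O.comp rfl (O.comp rfl Z 0 r) 0 X = O.comp rfl Z 0 (O.comp rfl r 0 X) :=
  (O.assoc_seq rfl rfl rfl rfl Z r X 0 0).symm

-- (Z ∘₀ r) ∘₁ X = (Z ∘₁ X) ∘₀ r
lemma pA1 (Z X : Q 1) (r : Q 0) :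
    O.comp rfl (O.comp rfl Z 0 r) 1 X = O.comp rfl (O.comp rfl Z 1 X) 0 r :=
  O.assoc_par (m:=1) (n:=0) (l:=1) rfl rfl rfl rfl Z r X 0 1 (by norm_num)

-- (Z ∘₁ r) ∘₀ X = (Z ∘₀ X) ∘₂ r
lemma pB0 (Z X : Q 1) (r : Q 0) :
    O.comp rfl (O.comp rfl Z 1 r) 0 X = O.comp rfl (O.comp rfl Z 0 X) 2 r :=
  (O.assoc_par (m:=1) (n:=1) (l:=0) rfl rfl rfl rfl Z X r 0 1 (by norm_num)).symm

-- (Z ∘₁ r) ∘₁ X = Z ∘₁ (r ∘₀ X)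
lemma pB1 (Z X : Q 1) (r : Q 0) :
    O.comp rfl (O.comp rfl Z 1 r) 1 X = O.comp rfl Z 1 (O.comp rfl r 0 X) :=
  (O.assoc_seq rfl rfl rfl rfl Z r X 1 0).symm

-- (r ∘₀ Z) ∘₀ X = r ∘₀ (Z ∘₀ X)
lemma pC0 (Z X : Q 1) (r : Q 0) :
    O.comp rfl (O.comp rfl r 0 Z) 0 X = O.comp rfl r 0 (O.comp rfl Z 0 X) :=
  (O.assoc_seq rfl rfl rfl rfl r Z X 0 0).symm

-- (r ∘₀ Z) ∘₁ X = r ∘₀ (Z ∘₁ X)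
lemma pC1 (Z X : Q 1) (r : Q 0) :
    O.comp rfl (O.comp rfl r 0 Z) 1 X = O.comp rfl r 0 (O.comp rfl Z 1 X) :=
  (O.assoc_seq rfl rfl rfl rfl r Z X 0 1).symm

-- Z ∘₀ (X ∘₀ r) = (Z ∘₀ X) ∘₀ r
lemma p600 (Z X : Q 1) (r : Q 0) :
    O.comp rfl Z 0 (O.comp rfl X 0 r) = O.comp rfl (O.comp rfl Z 0 X) 0 r :=
  O.assoc_seq rfl rfl rfl rfl Z X r 0 0

lemma p601 (Z X : Q 1) (r : Q 0) :
    O.comp rfl Z 0 (O.comp rfl X 1 r) = O.comp rfl (O.comp rfl Z 0 X) 1 r :=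
  O.assoc_seq rfl rfl rfl rfl Z X r 0 1

lemma p610 (Z X : Q 1) (r : Q 0) :
    O.comp rfl Z 1 (O.comp rfl X 0 r) = O.comp rfl (O.comp rfl Z 1 X) 1 r :=
  O.assoc_seq rfl rfl rfl rfl Z X r 1 0

lemma p611 (Z X : Q 1) (r : Q 0) :
    O.comp rfl Z 1 (O.comp rfl X 1 r) = O.comp rfl (O.comp rfl Z 1 X) 2 r :=
  O.assoc_seq rfl rfl rfl rfl Z X r 1 1

-- swaps of unary insertions on W : Q 2
lemma pSwap02 (W : Q 2) (r r' : Q 0) :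
    O.comp rfl (O.comp rfl W 0 r) 2 r' = O.comp rfl (O.comp rfl W 2 r') 0 r :=
  O.assoc_par rfl rfl rfl rfl W r r' 0 2 (by norm_num)

lemma pSwap12 (W : Q 2) (r r' : Q 0) :
    O.comp rfl (O.comp rfl W 1 r) 2 r' = O.comp rfl (O.comp rfl W 2 r') 1 r :=
  O.assoc_par rfl rfl rfl rfl W r r' 1 2 (by norm_num)

lemma pSwap01 (W : Q 2) (r r' : Q 0) :
    O.comp rfl (O.comp rfl W 0 r) 1 r' = O.comp rfl (O.comp rfl W 1 r') 0 r :=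
  O.assoc_par rfl rfl rfl rfl W r r' 0 1 (by norm_num)

end NSOperad


open NSOperad

theorem rota_baxter_induced_multiplication_and_representation {k : Type*} [Field k] {Q : ℕ → Type*}
    [∀ n, AddCommGroup (Q n)] [∀ n, Module k (Q n)] (O : NSOperad k Q)
    (π : Q 1) (hπ : O.IsMult π) (lam : k) (R : Q 0) (hR : O.IsRB π lam R) :
    O.IsMult (O.comp rfl π 0 R + O.comp rfl π 1 R + lam • π) ∧
    O.comp rfl (O.comp rfl π 0 R - O.comp rfl R 0 π) 0
        (O.comp rfl π 0 R + O.comp rfl π 1 R + lam • π) =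
      O.comp rfl (O.comp rfl π 0 R - O.comp rfl R 0 π) 1
        (O.comp rfl π 0 R - O.comp rfl R 0 π) ∧
    O.comp rfl (O.comp rfl π 1 R - O.comp rfl R 0 π) 0
        (O.comp rfl π 0 R - O.comp rfl R 0 π) =
      O.comp rfl (O.comp rfl π 0 R - O.comp rfl R 0 π) 1
        (O.comp rfl π 1 R - O.comp rfl R 0 π) ∧
    O.comp rfl (O.comp rfl π 1 R - O.comp rfl R 0 π) 0
        (O.comp rfl π 1 R - O.comp rfl R 0 π) =
      O.comp rfl (O.comp rfl π 1 R - O.comp rfl R 0 π) 1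
        (O.comp rfl π 0 R + O.comp rfl π 1 R + lam • π) := by
  have hm : O.comp rfl π 0 π = O.comp rfl π 1 π := hπ
  have hR' : O.comp rfl (O.comp rfl π 1 R) 0 R =
      O.comp rfl R 0 (O.comp rfl π 0 R + O.comp rfl π 1 R + lam • π) := hR
  have hRa := congrArg (fun x => O.comp (by norm_num : 1 + 1 = 2) π (0 : Fin 2) x) hR'
  have hRb := congrArg (fun x => O.comp (by norm_num : 1 + 1 = 2) π (1 : Fin 2) x) hR'
  have hR0 := congrArg (fun x => O.comp (by norm_num : 1 + 1 = 2) x (0 : Fin 2) π) hR'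
  have hR1 := congrArg (fun x => O.comp (by norm_num : 1 + 1 = 2) x (1 : Fin 2) π) hR'
  refine ⟨?_, ?_, ?_, ?_⟩ <;>
  · simp only [NSOperad.IsMult, O.comp_add_left, O.comp_add_right, O.comp_smul_left,
      O.comp_smul_right, O.comp_sub_left'_s18, O.comp_sub_right'_s18, O.pE0, O.pA1, O.pB0, O.pB1,
      O.pC0, O.pC1, O.p600, O.p601, O.p610, O.p611, O.pSwap02, O.pSwap12, O.pSwap01,
      ← hm] at hRa hRb hR0 hR1 ⊢
    first
    | linear_combination (norm := module) hRb - hRa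
    | linear_combination (norm := module) hR1 - hRa
    | linear_combination (norm := module) hR1 - hR0
    | linear_combination (norm := module) hRb - hR0
end

section
/- Let r ∈ P_1 be an averaging element for a multiplication π on a nonsymmetric operad P, i.e., (π ∘_2 r) ∘_1 r = r ∘_1 (π ∘_1 r) = r ∘_1 (π ∘_2 r). Then π_r^⊣ := π ∘_2 r and π_r^⊢ := π ∘_1 r are both multiplications on P, and they satisfy the compatibilities π_r^⊣ ∘_2 π_r^⊣ = π_r^⊣ ∘_2 π_r^⊢, π_r^⊣ ∘_1 π_r^⊢ = π_r^⊢ ∘_2 π_r^⊣, and π_r^⊢ ∘_1 π_r^⊢ = π_r^⊢ ∘_1 π_r^⊣ (i.e., they define a diassociative-type structure). -/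
open NSOperad

theorem averaging_induces_diassociative_structure {k : Type*} [Field k] {Q : ℕ → Type*}
    [∀ n, AddCommGroup (Q n)] [∀ n, Module k (Q n)] (O : NSOperad k Q)
    (π : Q 1) (hπ : O.IsMult π) (r : Q 0) (hr : O.IsAvg π r) :
    O.IsMult (O.comp rfl π 1 r) ∧
    O.IsMult (O.comp rfl π 0 r) ∧
    O.comp rfl (O.comp rfl π 1 r) 1 (O.comp rfl π 1 r) =
      O.comp rfl (O.comp rfl π 1 r) 1 (O.comp rfl π 0 r) ∧
    O.comp rfl (O.comp rfl π 1 r) 0 (O.comp rfl π 0 r) =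
      O.comp rfl (O.comp rfl π 0 r) 1 (O.comp rfl π 1 r) ∧
    O.comp rfl (O.comp rfl π 0 r) 0 (O.comp rfl π 0 r) =
      O.comp rfl (O.comp rfl π 0 r) 0 (O.comp rfl π 1 r) := by

  obtain ⟨avg1, avg2⟩ := hr
  -- abbreviations: A = π ∘₂ r = comp π 1 r, B = π ∘₁ r = comp π 0 r
  -- expansion lemmas
  have s1 : ∀ (X : Q 1), O.comp rfl (O.comp rfl π 1 r) 1 X
      = O.comp rfl π 1 (O.comp rfl r 0 X) :=
    fun X => (O.assoc_seq rfl rfl rfl rfl π r X 1 0).symm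
  have s2 : ∀ (X : Q 1), O.comp rfl (O.comp rfl π 1 r) 0 X
      = O.comp rfl (O.comp rfl π 0 X) 2 r :=
    fun X => (O.assoc_par (rfl : 1+1=2) (rfl : 2+0=2) (rfl : 1+0=1) (rfl : 1+1=2) π X r 0 1 (by decide)).symm
  have s3 : ∀ (X : Q 1), O.comp rfl (O.comp rfl π 0 r) 0 X
      = O.comp rfl π 0 (O.comp rfl r 0 X) :=
    fun X => (O.assoc_seq rfl rfl rfl rfl π r X 0 0).symm
  have s4 : ∀ (X : Q 1), O.comp rfl (O.comp rfl π 0 r) 1 X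
      = O.comp rfl (O.comp rfl π 1 X) 0 r :=
    fun X => O.assoc_par (rfl : 1+0=1) (rfl : 1+1=2) (rfl : 1+1=2) (rfl : 2+0=2) π r X 0 1 (by decide)
  have t1 : O.comp rfl π 0 (O.comp rfl π 1 r)
      = O.comp rfl (O.comp rfl π 0 π) 1 r := O.assoc_seq rfl rfl rfl rfl π π r 0 1
  have t2 : O.comp rfl π 1 (O.comp rfl π 1 r)
      = O.comp rfl (O.comp rfl π 1 π) 2 r := O.assoc_seq rfl rfl rfl rfl π π r 1 1
  have t3 : O.comp rfl π 0 (O.comp rfl π 0 r)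
      = O.comp rfl (O.comp rfl π 0 π) 0 r := O.assoc_seq rfl rfl rfl rfl π π r 0 0
  have t4 : O.comp rfl π 1 (O.comp rfl π 0 r)
      = O.comp rfl (O.comp rfl π 1 π) 1 r := O.assoc_seq rfl rfl rfl rfl π π r 1 0
  have hπ' : O.comp rfl π 0 π = O.comp rfl π 1 π := hπ
  refine ⟨?_, ?_, ?_, ?_, ?_⟩
  · -- A is a multiplication: A∘₀A = A∘₁A
    show O.comp rfl (O.comp rfl π 1 r) 0 (O.comp rfl π 1 r)
      = O.comp rfl (O.comp rfl π 1 r) 1 (O.comp rfl π 1 r)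
    rw [s2, s1, t1, ← avg2]
    rw [O.assoc_seq rfl rfl rfl rfl π (O.comp rfl π 1 r) r 1 0, t2]
    rw [hπ']
    exact O.assoc_par rfl rfl rfl rfl (O.comp rfl π 1 π) r r 1 2 (by decide)
  · -- B is a multiplication: B∘₀B = B∘₁B
    show O.comp rfl (O.comp rfl π 0 r) 0 (O.comp rfl π 0 r)
      = O.comp rfl (O.comp rfl π 0 r) 1 (O.comp rfl π 0 r)
    rw [s3, s4, t4, ← avg1]
    rw [O.assoc_seq rfl rfl rfl rfl π (O.comp rfl π 1 r) r 0 0, t1, hπ']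
    rfl
  · -- A∘₁A = A∘₁B
    rw [s1, s1, ← avg2, avg1]
  · -- A∘₀B = B∘₁A
    rw [s2, s4, t3, t2, ← hπ']
    exact O.assoc_par rfl rfl rfl rfl (O.comp rfl π 0 π) r r 0 2 (by decide)
  · -- B∘₀B = B∘₀A
    rw [s3, s3, ← avg1, avg2]
end
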